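/- arXiv:math-ph/0510060 — 6 statements merged into one kernel-verified Lean document; each statement's English description precedes it below -/
import Mathlib

section
/- Let d = 2, let μ′ be a translation-invariant probability measure on height configurations on ℤ² with μ′(ℛ) = 1, and let p ∈ (0,1]. Let ω and ω′ be two independent Bernoulli(p) random fields on ℤ (i.i.d. {0,1}-valued with P(ω(x)=1) = p), independent of η which is distributed according to μ′, and set ζ(x,y) = ω(x) + ω′(y) for (x,y) ∈ ℤ². Then the configuration η + ζ is almost surely not stabilizable; in particular the distribution μ′_p of η + ζ is not stabilizable. -/
open MeasureTheory
open scoped ENNReal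

/-- Nearest-neighbour adjacency on `ℤ^d`: `|x - y| = 1`. -/
def adj (d : ℕ) (x y : Fin d → ℤ) : Prop := (∑ i, (x i - y i).natAbs) = 1

instance (d : ℕ) (x y : Fin d → ℤ) : Decidable (adj d x y) := by
  unfold adj; infer_instance

/-- The finite-volume toppling operator `(Δ_V m)(x)`, for `x ∈ V`. -/
def lapV (d : ℕ) (V : Finset (Fin d → ℤ)) (m : (Fin d → ℤ) → ℕ) (x : Fin d → ℤ) : ℤ :=
  2 * d * (m x : ℤ) - ∑ y ∈ V.filter (fun y => adj d x y), (m y : ℤ)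

/-- `m` is a vector of toppling numbers making `η` stable in `V`:
`η(x) - (Δ_V m)(x) ≤ 2d` for all `x ∈ V`. -/
def Stabilizes (d : ℕ) (V : Finset (Fin d → ℤ)) (η m : (Fin d → ℤ) → ℕ) : Prop :=
  ∀ x ∈ V, (η x : ℤ) - lapV d V m x ≤ 2 * d

/-- `m` is the pointwise least (on `V`) vector of toppling numbers stabilizing `η` in `V`,
i.e. `m = m_V^η` on `V`. -/
def IsMinStab (d : ℕ) (V : Finset (Fin d → ℤ)) (η m : (Fin d → ℤ) → ℕ) : Prop :=
  Stabilizes d V η m ∧ ∀ m', Stabilizes d V η m' → ∀ x ∈ V, m x ≤ m' x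

/-- `η` is stabilizable: for every `x`, `sup_V m_V^η(x) < ∞`. -/
def Stabilizable (d : ℕ) (η : (Fin d → ℤ) → ℕ) : Prop :=
  ∀ x : Fin d → ℤ, ∃ C : ℕ, ∀ (V : Finset (Fin d → ℤ)) (m : (Fin d → ℤ) → ℕ),
    IsMinStab d V η m → x ∈ V → m x ≤ C

/-- The set `𝒮` of stabilizable configurations. -/
def StabSet (d : ℕ) : Set ((Fin d → ℤ) → ℕ) := {η | Stabilizable d η}

/-- The set of height configurations (all heights at least `1`). -/
def Heights (d : ℕ) : Set ((Fin d → ℤ) → ℕ) := {η | ∀ x, 1 ≤ η x}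

/-- The coordinate shift `τ_z η (x) = η (x + z)`. -/
def shiftC (d : ℕ) (z : Fin d → ℤ) (η : (Fin d → ℤ) → ℕ) : (Fin d → ℤ) → ℕ :=
  fun x => η (x + z)

/-- `ν` is stationary (translation invariant). -/
def Stationary (d : ℕ) (ν : Measure ((Fin d → ℤ) → ℕ)) : Prop :=
  ∀ z : Fin d → ℤ, MeasurePreserving (shiftC d z) ν ν

/-- `ν` is ergodic under the shift action: shift-invariant Borel sets are trivial. -/
def ErgodicShift (d : ℕ) (ν : Measure ((Fin d → ℤ) → ℕ)) : Prop :=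
  ∀ A : Set ((Fin d → ℤ) → ℕ), MeasurableSet A → (∀ z, shiftC d z ⁻¹' A = A) →
    ν A = 0 ∨ ν A = 1


/-- The set `ℛ` of (infinite-volume) recurrent configurations: stable configurations all of
whose finite restrictions are allowed. -/
def RecSet (d : ℕ) : Set ((Fin d → ℤ) → ℕ) :=
  {η | (∀ x, 1 ≤ η x ∧ η x ≤ 2 * d) ∧
    ∀ W : Finset (Fin d → ℤ), W.Nonempty →
      ∃ x ∈ W, (W.filter (fun y => adj d x y)).card < η x}

/-- `μ` is the Bernoulli(`p`) product measure on `{0,1}`-valued fields indexed by `I`. -/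
def IsBernoulliField {I : Type*} (p : ℝ) (μ : Measure (I → ℕ)) : Prop :=
  IsProbabilityMeasure μ ∧ ∀ (S : Finset I) (f : I → ℕ),
    μ {ω | ∀ x ∈ S, ω x = f x} =
      ∏ x ∈ S, (if f x = 1 then ENNReal.ofReal p
        else if f x = 0 then ENNReal.ofReal (1 - p) else 0)

namespace SandpileAux

open Finset

abbrev Pt := Fin 2 → ℤ

noncomputable section
open Classical

/-- The four lattice neighbours. -/
def nE (x : Pt) : Pt := ![x 0 + 1, x 1]
def nW (x : Pt) : Pt := ![x 0 - 1, x 1]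
def nN (x : Pt) : Pt := ![x 0, x 1 + 1]
def nS (x : Pt) : Pt := ![x 0, x 1 - 1]

@[simp] lemma nE0 (x : Pt) : nE x 0 = x 0 + 1 := rfl
@[simp] lemma nE1 (x : Pt) : nE x 1 = x 1 := rfl
@[simp] lemma nW0 (x : Pt) : nW x 0 = x 0 - 1 := rfl
@[simp] lemma nW1 (x : Pt) : nW x 1 = x 1 := rfl
@[simp] lemma nN0 (x : Pt) : nN x 0 = x 0 := rfl
@[simp] lemma nN1 (x : Pt) : nN x 1 = x 1 + 1 := rfl
@[simp] lemma nS0 (x : Pt) : nS x 0 = x 0 := rfl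
@[simp] lemma nS1 (x : Pt) : nS x 1 = x 1 - 1 := rfl

lemma adj_iff {x y : Pt} : adj 2 x y ↔ y = nE x ∨ y = nW x ∨ y = nN x ∨ y = nS x := by
  constructor
  · intro h
    unfold adj at h
    rw [Fin.sum_univ_two] at h
    have h2 : (x 0 - y 0 = 0 ∧ (x 1 - y 1 = 1 ∨ x 1 - y 1 = -1)) ∨
        ((x 0 - y 0 = 1 ∨ x 0 - y 0 = -1) ∧ x 1 - y 1 = 0) := by omega
    rcases h2 with ⟨h0, h1 | h1⟩ | ⟨h0 | h0, h1⟩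
    · exact Or.inr (Or.inr (Or.inr (by funext i; fin_cases i <;> simp [nS] <;> omega)))
    · exact Or.inr (Or.inr (Or.inl (by funext i; fin_cases i <;> simp [nN] <;> omega)))
    · exact Or.inr (Or.inl (by funext i; fin_cases i <;> simp [nW] <;> omega))
    · exact Or.inl (by funext i; fin_cases i <;> simp [nE] <;> omega)
  · intro h
    unfold adj
    rw [Fin.sum_univ_two]
    rcases h with rfl | rfl | rfl | rfl <;> simp [nE, nW, nN, nS] <;> omega

lemma adj_comm {x y : Pt} : adj 2 x y ↔ adj 2 y x := by
  unfold adj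
  rw [Fin.sum_univ_two, Fin.sum_univ_two]
  omega

lemma not_adj_self (x : Pt) : ¬ adj 2 x x := by
  unfold adj
  rw [Fin.sum_univ_two]
  omega

lemma adj_nE (x : Pt) : adj 2 x (nE x) := adj_iff.2 (Or.inl rfl)
lemma adj_nW (x : Pt) : adj 2 x (nW x) := adj_iff.2 (Or.inr (Or.inl rfl))
lemma adj_nN (x : Pt) : adj 2 x (nN x) := adj_iff.2 (Or.inr (Or.inr (Or.inl rfl)))
lemma adj_nS (x : Pt) : adj 2 x (nS x) := adj_iff.2 (Or.inr (Or.inr (Or.inr rfl)))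

lemma nE_ne_nW (x : Pt) : nE x ≠ nW x := fun h => by
  have := congrFun h 0; simp only [nE0, nW0] at this; omega
lemma nE_ne_nN (x : Pt) : nE x ≠ nN x := fun h => by
  have := congrFun h 0; simp only [nE0, nN0] at this; omega
lemma nE_ne_nS (x : Pt) : nE x ≠ nS x := fun h => by
  have := congrFun h 0; simp only [nE0, nS0] at this; omega
lemma nW_ne_nN (x : Pt) : nW x ≠ nN x := fun h => by
  have := congrFun h 0; simp only [nW0, nN0] at this; omega
lemma nW_ne_nS (x : Pt) : nW x ≠ nS x := fun h => by
  have := congrFun h 0; simp only [nW0, nS0] at this; omega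
lemma nN_ne_nS (x : Pt) : nN x ≠ nS x := fun h => by
  have := congrFun h 1; simp only [nN1, nS1] at this; omega

/-- The finset of the four neighbours of `x`. -/
def nbrs (x : Pt) : Finset Pt := {nE x, nW x, nN x, nS x}

lemma mem_nbrs {x y : Pt} : y ∈ nbrs x ↔ adj 2 x y := by
  simp [nbrs, adj_iff]

lemma card_nbrs (x : Pt) : (nbrs x).card = 4 := by
  rw [nbrs]
  rw [Finset.card_insert_of_notMem (by
    simp [Finset.mem_insert, nE_ne_nW, nE_ne_nN, nE_ne_nS])]
  rw [Finset.card_insert_of_notMem (by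
    simp [Finset.mem_insert, nW_ne_nN, nW_ne_nS])]
  rw [Finset.card_insert_of_notMem (by simp [nN_ne_nS])]
  simp

lemma sum_nbrs (x : Pt) (f : Pt → ℤ) :
    ∑ y ∈ nbrs x, f y = f (nE x) + f (nW x) + f (nN x) + f (nS x) := by
  rw [nbrs]
  rw [Finset.sum_insert (by
    simp [Finset.mem_insert, nE_ne_nW, nE_ne_nN, nE_ne_nS])]
  rw [Finset.sum_insert (by
    simp [Finset.mem_insert, nW_ne_nN, nW_ne_nS])]
  rw [Finset.sum_insert (by simp [nN_ne_nS])]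
  rw [Finset.sum_singleton]
  ring

/-- Axis-aligned rectangle as a finset of points. -/
def rect (a b c d : ℤ) : Finset Pt :=
  (Finset.Icc a b ×ˢ Finset.Icc c d).image (fun p => ![p.1, p.2])

lemma mem_rect {a b c d : ℤ} {x : Pt} :
    x ∈ rect a b c d ↔ a ≤ x 0 ∧ x 0 ≤ b ∧ c ≤ x 1 ∧ x 1 ≤ d := by
  simp only [rect, Finset.mem_image, Finset.mem_product, Finset.mem_Icc, Prod.exists]
  constructor
  · rintro ⟨u, v, ⟨⟨h1, h2⟩, h3, h4⟩, rfl⟩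
    simp [h1, h2, h3, h4]
  · rintro ⟨h1, h2, h3, h4⟩
    exact ⟨x 0, x 1, ⟨⟨h1, h2⟩, h3, h4⟩, by funext i; fin_cases i <;> simp⟩

end
end SandpileAux
namespace SandpileAux
noncomputable section
open Classical Finset

/-- Constant for the superharmonic weight. -/
def potC (V : Finset Pt) : ℤ :=
  ∑ y ∈ V, ((y 0) ^ 2 + (y 1) ^ 2 + 2 * ((y 0).natAbs : ℤ) + 2 * ((y 1).natAbs : ℤ) + 5)

/-- Superharmonic weight, positive on `V`, nonnegative on neighbours of `V`. -/
def wt (V : Finset Pt) (x : Pt) : ℤ := potC V - (x 0) ^ 2 - (x 1) ^ 2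

lemma potC_term_nonneg (y : Pt) :
    (0:ℤ) ≤ (y 0) ^ 2 + (y 1) ^ 2 + 2 * ((y 0).natAbs : ℤ) + 2 * ((y 1).natAbs : ℤ) + 5 := by
  positivity

lemma potC_ge {V : Finset Pt} {x : Pt} (hx : x ∈ V) :
    (x 0) ^ 2 + (x 1) ^ 2 + 2 * ((x 0).natAbs : ℤ) + 2 * ((x 1).natAbs : ℤ) + 5 ≤ potC V :=
  Finset.single_le_sum (fun y _ => potC_term_nonneg y) hx

lemma wt_pos {V : Finset Pt} {x : Pt} (hx : x ∈ V) : 1 ≤ wt V x := by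
  have h := potC_ge hx
  have h0 : (0:ℤ) ≤ ((x 0).natAbs : ℤ) := Int.natCast_nonneg _
  have h1 : (0:ℤ) ≤ ((x 1).natAbs : ℤ) := Int.natCast_nonneg _
  unfold wt
  linarith

lemma wt_nbr_nonneg {V : Finset Pt} {x y : Pt} (hx : x ∈ V) (hadj : adj 2 x y) :
    0 ≤ wt V y := by
  have h := potC_ge hx
  have h0 : x 0 ≤ ((x 0).natAbs : ℤ) := Int.le_natAbs
  have h0' : -((x 0).natAbs : ℤ) ≤ x 0 := by
    have := Int.natAbs_le_iff_sq_le (a := x 0) (b := x 0)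
    omega
  have h1 : x 1 ≤ ((x 1).natAbs : ℤ) := Int.le_natAbs
  have h1' : -((x 1).natAbs : ℤ) ≤ x 1 := by omega
  rcases adj_iff.1 hadj with rfl | rfl | rfl | rfl <;>
    · unfold wt
      simp only [nE0, nE1, nW0, nW1, nN0, nN1, nS0, nS1]
      nlinarith
lemma wt_sum_nbrs {V : Finset Pt} {x : Pt} (hx : x ∈ V) :
    ∑ y ∈ V.filter (fun y => adj 2 x y), wt V y ≤ 4 * wt V x - 4 := by
  have hsub : V.filter (fun y => adj 2 x y) ⊆ nbrs x := by
    intro y hy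
    exact mem_nbrs.2 (Finset.mem_filter.1 hy).2
  have h1 : ∑ y ∈ V.filter (fun y => adj 2 x y), wt V y ≤ ∑ y ∈ nbrs x, wt V y := by
    apply Finset.sum_le_sum_of_subset_of_nonneg hsub
    intro y hy _
    exact wt_nbr_nonneg hx (mem_nbrs.1 hy)
  have h2 : ∑ y ∈ nbrs x, wt V y = 4 * wt V x - 4 := by
    rw [sum_nbrs]
    unfold wt
    simp only [nE0, nE1, nW0, nW1, nN0, nN1, nS0, nS1]
    ring
  linarith

/-- Potential of a configuration in volume `V`. -/
def pot (V : Finset Pt) (η : Pt → ℕ) : ℤ := ∑ x ∈ V, (η x : ℤ) * wt V x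

lemma pot_nonneg (V : Finset Pt) (η : Pt → ℕ) : 0 ≤ pot V η :=
  Finset.sum_nonneg fun x hx =>
    mul_nonneg (Int.natCast_nonneg _) (by linarith [wt_pos hx])

lemma exists_stabilizes (V : Finset Pt) (η : Pt → ℕ) : ∃ m, Stabilizes 2 V η m := by
  suffices H : ∀ n : ℕ, ∀ η : Pt → ℕ, (pot V η).toNat ≤ n → ∃ m, Stabilizes 2 V η m from
    H (pot V η).toNat η le_rfl
  intro n
  induction n using Nat.strong_induction_on with
  | _ n IH =>
    intro η hn
    by_cases hst : ∀ x ∈ V, η x ≤ 4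
    · refine ⟨fun _ => 0, fun x hx => ?_⟩
      have : lapV 2 V (fun _ => 0) x = 0 := by simp [lapV]
      rw [this]
      have := hst x hx
      push_cast
      omega
    · push_neg at hst
      obtain ⟨x, hxV, hx4⟩ := hst
      set η' : Pt → ℕ := fun y =>
        if y = x then η y - 4 else if adj 2 x y ∧ y ∈ V then η y + 1 else η y with hη'
      have hc : ∀ z, (η' z : ℤ) =
          (η z : ℤ) - (if z = x then 4 else 0) + (if adj 2 x z ∧ z ∈ V then 1 else 0) := by
        intro z
        by_cases hz : z = x
        · have hna : ¬ (adj 2 x z ∧ z ∈ V) := by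
            intro h
            rw [hz] at h
            exact not_adj_self x h.1
          rw [if_pos hz, if_neg hna]
          have h4 : 4 ≤ η z := by rw [hz]; omega
          have he : η' z = η z - 4 := by rw [hη']; simp [hz]
          rw [he]
          omega
        · have he : η' z = if adj 2 x z ∧ z ∈ V then η z + 1 else η z := by
            rw [hη']; simp [hz]
          rw [he, if_neg hz]
          split_ifs <;> push_cast <;> ring
      have hpot' : pot V η' = pot V η - 4 * wt V x
          + ∑ y ∈ V.filter (fun y => adj 2 x y), wt V y := by
        unfold pot
        have e1 : ∀ z ∈ V, (η' z : ℤ) * wt V z =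
            (η z : ℤ) * wt V z - (if z = x then 4 * wt V z else 0)
              + (if adj 2 x z then wt V z else 0) := by
          intro z hz
          rw [hc z]
          by_cases h1 : z = x <;> by_cases h2 : adj 2 x z <;>
            simp [h1, h2, hz, not_adj_self x] <;> ring
        rw [Finset.sum_congr rfl e1]
        rw [Finset.sum_add_distrib, Finset.sum_sub_distrib]
        congr 1
        · congr 1
          rw [Finset.sum_ite_eq' V x (fun z => 4 * wt V z)]
          simp [hxV]
        · rw [← Finset.sum_filter]
      have hΦ' : pot V η' ≤ pot V η - 4 := by
        have := wt_sum_nbrs hxV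
        linarith
      have hΦlb : 5 ≤ pot V η := by
        have h1 : (η x : ℤ) * wt V x ≤ pot V η :=
          Finset.single_le_sum
            (fun z hz => mul_nonneg (Int.natCast_nonneg _) (by linarith [wt_pos hz])) hxV
        have h2 : (5:ℤ) ≤ (η x : ℤ) := by exact_mod_cast hx4
        have h3 := wt_pos hxV
        nlinarith
      have hlt : (pot V η').toNat < n := by
        have h0 := pot_nonneg V η'
        omega
      obtain ⟨m', hm'⟩ := IH _ hlt η' le_rfl
      refine ⟨fun y => m' y + if y = x then 1 else 0, ?_⟩
      intro z hz
      have hlap : lapV 2 V (fun y => m' y + if y = x then 1 else 0) z =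
          lapV 2 V m' z + (if z = x then 4 else 0) - (if adj 2 z x then 1 else 0) := by
        have e2 : ∀ y : Pt, ((m' y + if y = x then 1 else 0 : ℕ) : ℤ) =
            (m' y : ℤ) + (if y = x then 1 else 0) := by
          intro y; split_ifs <;> push_cast <;> ring
        unfold lapV
        simp only [e2]
        rw [Finset.sum_add_distrib]
        rw [Finset.sum_ite_eq' (V.filter (fun y => adj 2 z y)) x (fun _ => (1:ℤ))]
        have e3 : (if x ∈ V.filter (fun y => adj 2 z y) then (1:ℤ) else 0) =
            if adj 2 z x then 1 else 0 := by
          simp [Finset.mem_filter, hxV]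
        rw [e3]
        split_ifs <;> push_cast <;> ring
      have hηz : (η z : ℤ) = (η' z : ℤ) + (if z = x then 4 else 0)
          - (if adj 2 x z ∧ z ∈ V then 1 else 0) := by
        rw [hc z]; ring
      have hadje : (if adj 2 z x then (1:ℤ) else 0) = (if adj 2 x z ∧ z ∈ V then 1 else 0) := by
        by_cases h : adj 2 x z
        · rw [if_pos (adj_comm.2 h), if_pos ⟨h, hz⟩]
        · rw [if_neg (fun h' => h (adj_comm.2 h')), if_neg (fun h' => h h'.1)]
      have := hm' z hz
      rw [hlap, hηz, hadje]
      linarith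
lemma stab_min_aux {V : Finset Pt} {η m1 m2 : Pt → ℕ}
    (h1 : Stabilizes 2 V η m1) {x : Pt} (hx : x ∈ V) (hle : m1 x ≤ m2 x) :
    (η x : ℤ) - lapV 2 V (fun y => m1 y ⊓ m2 y) x ≤ 2 * 2 := by
  have hxval : ((m1 x ⊓ m2 x : ℕ) : ℤ) = (m1 x : ℤ) := by
    rw [inf_eq_left.2 hle]
  have hsum : ∑ y ∈ V.filter (fun y => adj 2 x y), ((m1 y ⊓ m2 y : ℕ) : ℤ) ≤
      ∑ y ∈ V.filter (fun y => adj 2 x y), (m1 y : ℤ) := by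
    apply Finset.sum_le_sum
    intro y _
    exact_mod_cast inf_le_left
  have := h1 x hx
  unfold lapV at this ⊢
  simp only []
  push_cast at this hsum hxval ⊢
  rw [hxval]
  linarith

lemma stab_min {V : Finset Pt} {η m1 m2 : Pt → ℕ}
    (h1 : Stabilizes 2 V η m1) (h2 : Stabilizes 2 V η m2) :
    Stabilizes 2 V η (fun y => m1 y ⊓ m2 y) := by
  intro x hx
  rcases le_total (m1 x) (m2 x) with h | h
  · exact_mod_cast stab_min_aux h1 hx h
  · have hfun : (fun y => m1 y ⊓ m2 y) = (fun y => m2 y ⊓ m1 y) := by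
      funext y; exact inf_comm _ _
    rw [hfun]
    exact_mod_cast stab_min_aux h2 hx h

lemma stab_inf' {V : Finset Pt} {η : Pt → ℕ} {γ : Type} (F : Finset γ) (hF : F.Nonempty)
    (g : γ → Pt → ℕ) (hg : ∀ z ∈ F, Stabilizes 2 V η (g z)) :
    Stabilizes 2 V η (fun y => F.inf' hF (fun z => g z y)) := by
  induction hF using Finset.Nonempty.cons_induction with
  | singleton a =>
    have h : (fun y => Finset.inf' {a} (Finset.singleton_nonempty a) (fun z => g z y)) = g a := by
      funext y; simp
    rw [h]
    exact hg a (Finset.mem_singleton_self a)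
  | cons a s ha hs ih =>
    have h : (fun y => (Finset.cons a s ha).inf' (Finset.cons_nonempty ha) (fun z => g z y)) =
        (fun y => g a y ⊓ s.inf' hs (fun z => g z y)) := by
      funext y
      exact Finset.inf'_cons hs _
    rw [h]
    exact stab_min (hg a (Finset.mem_cons_self a s))
      (ih (fun z hz => hg z (Finset.mem_cons_of_mem hz)))

lemma exists_isMinStab (V : Finset Pt) (η : Pt → ℕ) : ∃ m, IsMinStab 2 V η m := by
  classical
  obtain ⟨m₀, hm₀⟩ := exists_stabilizes V η
  have hPne : ∀ z : Pt, {n | ∃ m, Stabilizes 2 V η m ∧ m z = n}.Nonempty :=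
    fun z => ⟨m₀ z, m₀, hm₀, rfl⟩
  set ms : Pt → ℕ := fun z => sInf {n | ∃ m, Stabilizes 2 V η m ∧ m z = n} with hms
  have hminle : ∀ m, Stabilizes 2 V η m → ∀ z, ms z ≤ m z :=
    fun m hm z => Nat.sInf_le ⟨m, hm, rfl⟩
  have hattain : ∀ z : Pt, ∃ m, Stabilizes 2 V η m ∧ m z = ms z := fun z =>
    Nat.sInf_mem (hPne z)
  choose mw hmw1 hmw2 using hattain
  refine ⟨ms, ?_, fun m' hm' x _ => hminle m' hm' x⟩
  intro x hx
  set F : Finset Pt := insert x (V.filter (fun y => adj 2 x y)) with hF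
  have hFne : F.Nonempty := ⟨x, Finset.mem_insert_self _ _⟩
  have hM : Stabilizes 2 V η (fun y => F.inf' hFne (fun z => mw z y)) :=
    stab_inf' F hFne mw (fun z _ => hmw1 z)
  have hMeq : ∀ z ∈ F, F.inf' hFne (fun w => mw w z) = ms z := by
    intro z hzF
    apply le_antisymm
    · calc F.inf' hFne (fun w => mw w z) ≤ mw z z := Finset.inf'_le _ hzF
        _ = ms z := hmw2 z
    · exact Finset.le_inf' hFne _ (fun w _ => hminle (mw w) (hmw1 w) z)
  have hMx := hM x hx
  unfold lapV at hMx ⊢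
  simp only [] at hMx
  have e1 : F.inf' hFne (fun w => mw w x) = ms x := hMeq x (Finset.mem_insert_self _ _)
  have e2 : ∑ y ∈ V.filter (fun y => adj 2 x y), ((F.inf' hFne (fun w => mw w y) : ℕ) : ℤ) =
      ∑ y ∈ V.filter (fun y => adj 2 x y), (ms y : ℤ) := by
    apply Finset.sum_congr rfl
    intro y hy
    rw [hMeq y (Finset.mem_insert_of_mem hy)]
  rw [e1, e2] at hMx
  exact hMx
lemma sum_nbrs' {M : Type} [AddCommMonoid M] (x : Pt) (f : Pt → M) :
    ∑ y ∈ nbrs x, f y = f (nE x) + f (nW x) + f (nN x) + f (nS x) := by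
  rw [nbrs]
  rw [Finset.sum_insert (by
    simp [Finset.mem_insert, nE_ne_nW, nE_ne_nN, nE_ne_nS])]
  rw [Finset.sum_insert (by
    simp [Finset.mem_insert, nW_ne_nN, nW_ne_nS])]
  rw [Finset.sum_insert (by simp [nN_ne_nS])]
  rw [Finset.sum_singleton]
  ac_rfl

lemma seq_mono {k : ℕ} {f : ℕ → ℤ} (hf : ∀ j, j < k → f j < f (j + 1)) :
    ∀ i i', i ≤ i' → i' ≤ k → f i ≤ f i' := by
  intro i i' h hk
  induction i' with
  | zero =>
    have : i = 0 := Nat.le_zero.mp h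
    rw [this]
  | succ n ih =>
    rcases Nat.lt_or_ge i (n + 1) with h' | h'
    · have h1 : f i ≤ f n := ih (by omega) (by omega)
      have h2 := hf n (by omega)
      omega
    · have : i = n + 1 := by omega
      rw [this]

lemma key_lemma (η : Pt → ℕ) (ω ω' : ℤ → ℕ) (hη : η ∈ RecSet 2) (k : ℕ) (a b c d : ℕ → ℤ)
    (ha : ∀ j, j < k → a j < a (j + 1)) (hb : ∀ j, j < k → b (j + 1) < b j)
    (hc : ∀ j, j < k → c j < c (j + 1)) (hd : ∀ j, j < k → d (j + 1) < d j)
    (hab : a k < b k) (hcd : c k < d k)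
    (hωa : ∀ j, j ≤ k → 1 ≤ ω (a j)) (hωb : ∀ j, j ≤ k → 1 ≤ ω (b j))
    (hωc : ∀ j, j ≤ k → 1 ≤ ω' (c j)) (hωd : ∀ j, j ≤ k → 1 ≤ ω' (d j))
    (V : Finset Pt) (hV : rect (a 0) (b 0) (c 0) (d 0) ⊆ V)
    (m : Pt → ℕ) (hm : Stabilizes 2 V (fun x => η x + ω (x 0) + ω' (x 1)) m) :
    ∀ j, j ≤ k → ∀ x ∈ rect (a j) (b j) (c j) (d j), j ≤ m x := by
  classical
  have hamono := seq_mono ha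
  have hcmono := seq_mono hc
  have hbmono : ∀ i i', i ≤ i' → i' ≤ k → b i' ≤ b i := by
    intro i i' h hk'
    have := seq_mono (f := fun j => -(b j)) (fun j hj => by simpa using hb j hj) i i' h hk'
    simpa using this
  have hdmono : ∀ i i', i ≤ i' → i' ≤ k → d i' ≤ d i := by
    intro i i' h hk'
    have := seq_mono (f := fun j => -(d j)) (fun j hj => by simpa using hd j hj) i i' h hk'
    simpa using this
  have hrectV : ∀ j, j ≤ k → rect (a j) (b j) (c j) (d j) ⊆ V := by
    intro j hj y hy
    apply hV
    rw [mem_rect] at hy ⊢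
    have h1 := hamono 0 j (Nat.zero_le _) hj
    have h2 := hbmono 0 j (Nat.zero_le _) hj
    have h3 := hcmono 0 j (Nat.zero_le _) hj
    have h4 := hdmono 0 j (Nat.zero_le _) hj
    omega
  intro j
  induction j with
  | zero => intro _ x _; exact Nat.zero_le _
  | succ j IHj =>
    intro hjk x₀ hx₀
    have hjk' : j ≤ k := Nat.le_of_succ_le hjk
    have IH := IHj hjk'
    by_contra hcon
    push_neg at hcon
    have hmx₀ : m x₀ ≤ j := by omega
    set R' : Finset Pt := rect (a (j+1)) (b (j+1)) (c (j+1)) (d (j+1)) with hR'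
    set Rj : Finset Pt := rect (a j) (b j) (c j) (d j) with hRj
    set T : Finset Pt := R'.filter (fun y => m y ≤ j) with hTdef
    have hTne : T.Nonempty := ⟨x₀, Finset.mem_filter.2 ⟨hx₀, hmx₀⟩⟩
    obtain ⟨x, hxT, hcard⟩ := hη.2 T hTne
    have hxR' : x ∈ R' := (Finset.mem_filter.1 hxT).1
    have hmxle : m x ≤ j := (Finset.mem_filter.1 hxT).2
    -- coordinates of x
    have hco := mem_rect.1 hxR'
    obtain ⟨h1, h2, h3, h4⟩ := hco
    -- strict nesting
    have hajlt : a j < a (j+1) := ha j (by omega)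
    have hbjlt : b (j+1) < b j := hb j (by omega)
    have hcjlt : c j < c (j+1) := hc j (by omega)
    have hdjlt : d (j+1) < d j := hd j (by omega)
    have habj : a (j+1) < b (j+1) := by
      have := hamono (j+1) k hjk le_rfl
      have := hbmono (j+1) k hjk le_rfl
      omega
    have hcdj : c (j+1) < d (j+1) := by
      have := hcmono (j+1) k hjk le_rfl
      have := hdmono (j+1) k hjk le_rfl
      omega
    have hsubR'Rj : R' ⊆ Rj := by
      intro y hy
      rw [mem_rect] at hy ⊢
      omega
    have hxRj : x ∈ Rj := hsubR'Rj hxR'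
    have hmx : m x = j := le_antisymm hmxle (IH x hxRj)
    have hxV : x ∈ V := hrectV j hjk' hxRj
    -- neighbours lie in Rj
    have hnbrsRj : nbrs x ⊆ Rj := by
      intro y hy
      simp only [nbrs, Finset.mem_insert, Finset.mem_singleton] at hy
      rcases hy with rfl | rfl | rfl | rfl <;>
        · rw [mem_rect]
          simp only [nE0, nE1, nW0, nW1, nN0, nN1, nS0, nS1]
          omega
    set A : Finset Pt := Rj.filter (fun y => adj 2 x y) with hA
    set B : Finset Pt := R'.filter (fun y => adj 2 x y) with hB
    set T' : Finset Pt := T.filter (fun y => adj 2 x y) with hT'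
    have hAN : nbrs x ⊆ A := by
      intro y hy
      exact Finset.mem_filter.2 ⟨hnbrsRj hy, mem_nbrs.1 hy⟩
    have hAcard : 4 ≤ A.card := by
      have := Finset.card_le_card hAN
      rw [card_nbrs] at this
      exact this
    have hBA : B ⊆ A := Finset.filter_subset_filter _ hsubR'Rj
    have hT'B : T' ⊆ B := Finset.filter_subset_filter _ (Finset.filter_subset _ _)
    have hBT'A : B \ T' ⊆ A := (Finset.sdiff_subset).trans hBA
    -- sums
    have hsum1 : ∑ y ∈ A, (m y : ℤ) ≤ ∑ y ∈ V.filter (fun y => adj 2 x y), (m y : ℤ) := by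
      apply Finset.sum_le_sum_of_subset_of_nonneg
        (Finset.filter_subset_filter _ (hrectV j hjk'))
      intro y _ _
      exact Int.natCast_nonneg _
    have hsplit : ∑ y ∈ A \ (B \ T'), (m y : ℤ) + ∑ y ∈ B \ T', (m y : ℤ)
        = ∑ y ∈ A, (m y : ℤ) := Finset.sum_sdiff hBT'A
    have hlow1 : ∀ y ∈ A \ (B \ T'), (j : ℤ) ≤ (m y : ℤ) := by
      intro y hy
      have hyA : y ∈ A := Finset.mem_sdiff.1 hy |>.1
      have := IH y (Finset.mem_filter.1 hyA).1
      exact_mod_cast this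
    have hlow2 : ∀ y ∈ B \ T', (j : ℤ) + 1 ≤ (m y : ℤ) := by
      intro y hy
      rw [Finset.mem_sdiff] at hy
      obtain ⟨hyB, hyT'⟩ := hy
      have hyR' : y ∈ R' := (Finset.mem_filter.1 hyB).1
      have hyadj : adj 2 x y := (Finset.mem_filter.1 hyB).2
      have : ¬ (m y ≤ j) := by
        intro hle
        exact hyT' (Finset.mem_filter.2 ⟨Finset.mem_filter.2 ⟨hyR', hle⟩, hyadj⟩)
      have : j + 1 ≤ m y := by omega
      exact_mod_cast this
    have hc1 : ((A \ (B \ T')).card : ℤ) * (j : ℤ) ≤ ∑ y ∈ A \ (B \ T'), (m y : ℤ) := by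
      have := Finset.card_nsmul_le_sum (A \ (B \ T')) (fun y => (m y : ℤ)) (j : ℤ) hlow1
      simpa [nsmul_eq_mul] using this
    have hc2 : ((B \ T').card : ℤ) * ((j : ℤ) + 1) ≤ ∑ y ∈ B \ T', (m y : ℤ) := by
      have := Finset.card_nsmul_le_sum (B \ T') (fun y => (m y : ℤ)) ((j : ℤ) + 1) hlow2
      simpa [nsmul_eq_mul] using this
    -- card arithmetic
    have hcT'B : T'.card ≤ B.card := Finset.card_le_card hT'B
    have hcsd1 : (B \ T').card = B.card - T'.card := Finset.card_sdiff_of_subset hT'B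
    have hcsd2 : (A \ (B \ T')).card = A.card - (B \ T').card := Finset.card_sdiff_of_subset hBT'A
    -- total lower bound on the neighbour sum
    have htot : (j : ℤ) * 4 + (B.card : ℤ) - (T'.card : ℤ)
        ≤ ∑ y ∈ V.filter (fun y => adj 2 x y), (m y : ℤ) := by
      have hcBT'A : (B \ T').card ≤ A.card := Finset.card_le_card hBT'A
      have e2 : ((B \ T').card : ℤ) = (B.card : ℤ) - (T'.card : ℤ) := by
        rw [hcsd1, Nat.cast_sub hcT'B]
      have e1 : ((A \ (B \ T')).card : ℤ) = (A.card : ℤ) - ((B \ T').card : ℤ) := by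
        rw [hcsd2, Nat.cast_sub hcBT'A]
      have hj0 : (0:ℤ) ≤ (j:ℤ) := Int.natCast_nonneg _
      have hr : (j:ℤ) * (A.card : ℤ) =
          ((A \ (B \ T')).card : ℤ) * (j : ℤ) + ((B \ T').card : ℤ) * (j : ℤ) := by
        rw [e1]; ring
      have hj4 : (j : ℤ) * 4 ≤ (j : ℤ) * (A.card : ℤ) := by
        apply mul_le_mul_of_nonneg_left _ hj0
        exact_mod_cast hAcard
      have hc2' : ((B \ T').card : ℤ) * (j : ℤ) + ((B \ T').card : ℤ)
          ≤ ∑ y ∈ B \ T', (m y : ℤ) := by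
        have hrg : ((B \ T').card : ℤ) * ((j : ℤ) + 1) =
            ((B \ T').card : ℤ) * (j : ℤ) + ((B \ T').card : ℤ) := by ring
        rw [hrg] at hc2
        exact hc2
      linarith [hc1, hc2', hsplit, hsum1, hj4, hr, e2]
    -- boundary compensation
    have hBcardZ : (B.card : ℤ) = (if nE x ∈ R' then (1:ℤ) else 0) +
        (if nW x ∈ R' then (1:ℤ) else 0) + (if nN x ∈ R' then (1:ℤ) else 0) +
        (if nS x ∈ R' then (1:ℤ) else 0) := by
      have hBeq : B = (nbrs x).filter (fun y => y ∈ R') := by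
        ext y
        rw [hB, Finset.mem_filter, Finset.mem_filter, mem_nbrs]
        tauto
      rw [hBeq, Finset.card_filter, sum_nbrs' x (fun y => if y ∈ R' then (1:ℕ) else 0)]
      push_cast
      split_ifs <;> norm_num
    have claim0 : 2 ≤ (if nE x ∈ R' then (1:ℤ) else 0) + (if nW x ∈ R' then (1:ℤ) else 0)
        + (ω (x 0) : ℤ) := by
      have hωnn : (0:ℤ) ≤ (ω (x 0) : ℤ) := Int.natCast_nonneg _
      by_cases hx0a : x 0 = a (j+1)
      · have hω1 : (1:ℤ) ≤ (ω (x 0) : ℤ) := by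
          rw [hx0a]; exact_mod_cast hωa (j+1) hjk
        have hE : nE x ∈ R' := mem_rect.2 (by simp only [nE0, nE1]; omega)
        rw [if_pos hE]
        split_ifs <;> linarith
      · by_cases hx0b : x 0 = b (j+1)
        · have hω1 : (1:ℤ) ≤ (ω (x 0) : ℤ) := by
            rw [hx0b]; exact_mod_cast hωb (j+1) hjk
          have hW : nW x ∈ R' := mem_rect.2 (by simp only [nW0, nW1]; omega)
          rw [if_pos hW]
          split_ifs <;> linarith
        · have hE : nE x ∈ R' := mem_rect.2 (by simp only [nE0, nE1]; omega)
          have hW : nW x ∈ R' := mem_rect.2 (by simp only [nW0, nW1]; omega)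
          rw [if_pos hE, if_pos hW]
          linarith
    have claim1 : 2 ≤ (if nN x ∈ R' then (1:ℤ) else 0) + (if nS x ∈ R' then (1:ℤ) else 0)
        + (ω' (x 1) : ℤ) := by
      have hωnn : (0:ℤ) ≤ (ω' (x 1) : ℤ) := Int.natCast_nonneg _
      by_cases hx1c : x 1 = c (j+1)
      · have hω1 : (1:ℤ) ≤ (ω' (x 1) : ℤ) := by
          rw [hx1c]; exact_mod_cast hωc (j+1) hjk
        have hN : nN x ∈ R' := mem_rect.2 (by simp only [nN0, nN1]; omega)
        rw [if_pos hN]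
        split_ifs <;> linarith
      · by_cases hx1d : x 1 = d (j+1)
        · have hω1 : (1:ℤ) ≤ (ω' (x 1) : ℤ) := by
            rw [hx1d]; exact_mod_cast hωd (j+1) hjk
          have hS : nS x ∈ R' := mem_rect.2 (by simp only [nS0, nS1]; omega)
          rw [if_pos hS]
          split_ifs <;> linarith
        · have hN : nN x ∈ R' := mem_rect.2 (by simp only [nN0, nN1]; omega)
          have hS : nS x ∈ R' := mem_rect.2 (by simp only [nS0, nS1]; omega)
          rw [if_pos hN, if_pos hS]
          linarith
    have hζB : 4 ≤ (B.card : ℤ) + (ω (x 0) : ℤ) + (ω' (x 1) : ℤ) := by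
      rw [hBcardZ]
      linarith
    -- the stabilization inequality at x
    have hs := hm x hxV
    unfold lapV at hs
    push_cast at hs
    have hmxZ : ((m x : ℕ) : ℤ) = (j : ℤ) := by exact_mod_cast hmx
    rw [hmxZ] at hs
    -- allowedness
    have hcardZ : (T'.card : ℤ) < (η x : ℤ) := by
      rw [hT']
      exact_mod_cast hcard
    linarith
/-- `ω` has sites with value one unboundedly far in both directions. -/
def Good (ω : ℤ → ℕ) : Prop :=
  ∀ n : ℤ, (∃ z, n < z ∧ ω z = 1) ∧ (∃ z, z < n ∧ ω z = 1)

lemma exists_seq_left (ω : ℤ → ℕ) (h : Good ω) :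
    ∃ u : ℕ → ℤ, u 0 < 0 ∧ (∀ i, u (i + 1) < u i) ∧ ∀ i, ω (u i) = 1 := by
  have h' : ∀ n : ℤ, ∃ z, z < n ∧ ω z = 1 := fun n => (h n).2
  choose F hF1 hF2 using h'
  refine ⟨fun i => Nat.rec (F 0) (fun _ prev => F prev) i, hF1 0, fun i => hF1 _, fun i => ?_⟩
  cases i with
  | zero => exact hF2 0
  | succ n => exact hF2 _

lemma exists_seq_right (ω : ℤ → ℕ) (h : Good ω) :
    ∃ v : ℕ → ℤ, 0 < v 0 ∧ (∀ i, v i < v (i + 1)) ∧ ∀ i, ω (v i) = 1 := by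
  have h' : ∀ n : ℤ, ∃ z, n < z ∧ ω z = 1 := fun n => (h n).1
  choose F hF1 hF2 using h'
  refine ⟨fun i => Nat.rec (F 0) (fun _ prev => F prev) i, hF1 0, fun i => hF1 _, fun i => ?_⟩
  cases i with
  | zero => exact hF2 0
  | succ n => exact hF2 _

lemma good_not_stabilizable (η : Pt → ℕ) (ω ω' : ℤ → ℕ) (hη : η ∈ RecSet 2)
    (hg : Good ω) (hg' : Good ω') :
    ¬ Stabilizable 2 (fun x => η x + ω (x 0) + ω' (x 1)) := by
  intro hstab
  obtain ⟨C, hC⟩ := hstab (fun _ => 0)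
  set k := C + 1 with hk
  obtain ⟨u, hu0, hud, huω⟩ := exists_seq_left ω hg
  obtain ⟨v, hv0, hvd, hvω⟩ := exists_seq_right ω hg
  obtain ⟨u', hu'0, hu'd, hu'ω⟩ := exists_seq_left ω' hg'
  obtain ⟨v', hv'0, hv'd, hv'ω⟩ := exists_seq_right ω' hg'
  have hulow : ∀ i, u i < 0 := by
    intro i; induction i with
    | zero => exact hu0
    | succ n ih => exact lt_trans (hud n) ih
  have hvhigh : ∀ i, 0 < v i := by
    intro i; induction i with
    | zero => exact hv0
    | succ n ih => exact lt_trans ih (hvd n)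
  have hu'low : ∀ i, u' i < 0 := by
    intro i; induction i with
    | zero => exact hu'0
    | succ n ih => exact lt_trans (hu'd n) ih
  have hv'high : ∀ i, 0 < v' i := by
    intro i; induction i with
    | zero => exact hv'0
    | succ n ih => exact lt_trans ih (hv'd n)
  set a : ℕ → ℤ := fun j => u (k - j) with haa
  set b : ℕ → ℤ := fun j => v (k - j) with hbb
  set c : ℕ → ℤ := fun j => u' (k - j) with hcc
  set d : ℕ → ℤ := fun j => v' (k - j) with hdd
  set V : Finset Pt := rect (a 0) (b 0) (c 0) (d 0) with hVdef
  obtain ⟨m, hmin⟩ := exists_isMinStab V (fun x => η x + ω (x 0) + ω' (x 1))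
  have hkey := key_lemma η ω ω' hη k a b c d
    (fun j hj => by
      rw [haa]
      simp only []
      rw [show k - j = (k - (j+1)) + 1 from by omega]
      exact hud _)
    (fun j hj => by
      rw [hbb]
      simp only []
      rw [show k - j = (k - (j+1)) + 1 from by omega]
      exact hvd _)
    (fun j hj => by
      rw [hcc]
      simp only []
      rw [show k - j = (k - (j+1)) + 1 from by omega]
      exact hu'd _)
    (fun j hj => by
      rw [hdd]
      simp only []
      rw [show k - j = (k - (j+1)) + 1 from by omega]
      exact hv'd _)
    (by
      rw [haa, hbb]
      simp only [Nat.sub_self]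
      exact lt_trans (hulow 0) (hvhigh 0))
    (by
      rw [hcc, hdd]
      simp only [Nat.sub_self]
      exact lt_trans (hu'low 0) (hv'high 0))
    (fun j _ => (huω _).ge)
    (fun j _ => (hvω _).ge)
    (fun j _ => (hu'ω _).ge)
    (fun j _ => (hv'ω _).ge)
    V (by rw [hVdef]) m hmin.1
  have hzero : (fun _ => (0:ℤ) : Pt) ∈ rect (a k) (b k) (c k) (d k) := by
    rw [mem_rect]
    rw [haa, hbb, hcc, hdd]
    simp only [Nat.sub_self]
    constructor
    · exact le_of_lt (hulow 0)
    constructor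
    · exact le_of_lt (hvhigh 0)
    constructor
    · exact le_of_lt (hu'low 0)
    · exact le_of_lt (hv'high 0)
  have hge := hkey k le_rfl (fun _ => 0) hzero
  have hzeroV : (fun _ => (0:ℤ) : Pt) ∈ V := by
    rw [hVdef, mem_rect]
    rw [haa, hbb, hcc, hdd]
    simp only [Nat.sub_zero]
    exact ⟨le_of_lt (hulow k), le_of_lt (hvhigh k), le_of_lt (hu'low k), le_of_lt (hv'high k)⟩
  have hle := hC V m hmin hzeroV
  omega
lemma countable_pi_measurable {V : Finset Pt} (Y : Set ((↥V) → ℕ)) : MeasurableSet Y := by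
  have hsing : ∀ f : (↥V) → ℕ, MeasurableSet ({f} : Set ((↥V) → ℕ)) := by
    intro f
    have h : ({f} : Set ((↥V) → ℕ)) = ⋂ v : ↥V, (fun g : (↥V) → ℕ => g v) ⁻¹' {f v} := by
      ext g
      simp [funext_iff]
    rw [h]
    exact MeasurableSet.iInter (fun v => (measurable_pi_apply v) (measurableSet_singleton _))
  have h : Y = ⋃ f ∈ Y, {f} := by simp
  rw [h]
  exact MeasurableSet.biUnion (Set.to_countable Y) (fun f _ => hsing f)

lemma cylinder_measurable (V : Finset Pt) (S : Set (Pt → ℕ))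
    (hS : ∀ η η' : Pt → ℕ, (∀ v ∈ V, η v = η' v) → η ∈ S → η' ∈ S) :
    MeasurableSet S := by
  classical
  set r : (Pt → ℕ) → ((↥V) → ℕ) := fun η v => η ↑v with hr
  have hrm : Measurable r := measurable_pi_iff.2 (fun v => measurable_pi_apply _)
  have hSeq : S = r ⁻¹' (r '' S) := by
    ext η
    constructor
    · exact fun h => Set.mem_image_of_mem r h
    · rintro ⟨η₀, h₀, he⟩
      exact hS η₀ η (fun v hv => congrFun he ⟨v, hv⟩) h₀
  rw [hSeq]
  exact hrm (countable_pi_measurable _)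

lemma measurable_recSet : MeasurableSet (RecSet 2) := by
  have h : RecSet 2 = (⋂ x : Pt, {η : Pt → ℕ | 1 ≤ η x ∧ η x ≤ 2 * 2}) ∩
      ⋂ W : Finset Pt,
        {η : Pt → ℕ | W.Nonempty → ∃ x ∈ W, (W.filter (fun y => adj 2 x y)).card < η x} := by
    ext η
    simp only [RecSet, Set.mem_setOf_eq, Set.mem_inter_iff, Set.mem_iInter]
  rw [h]
  apply MeasurableSet.inter
  · exact MeasurableSet.iInter (fun x => cylinder_measurable {x} _ (by
      intro η η' hagree hmem
      have hx := hagree x (Finset.mem_singleton_self x)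
      rw [Set.mem_setOf_eq] at hmem ⊢
      omega))
  · exact MeasurableSet.iInter (fun W => cylinder_measurable W _ (by
      intro η η' hagree hmem hne
      obtain ⟨x, hx, hlt⟩ := hmem hne
      exact ⟨x, hx, by rw [← hagree x hx]; exact hlt⟩))

lemma stab_congr {V : Finset Pt} {η η' m : Pt → ℕ}
    (hagree : ∀ v ∈ V, η v = η' v) (h : Stabilizes 2 V η m) : Stabilizes 2 V η' m := by
  intro x hx
  have h1 := h x hx
  rwa [hagree x hx] at h1

lemma isMinStab_congr {V : Finset Pt} {η η' m : Pt → ℕ}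
    (hagree : ∀ v ∈ V, η v = η' v) (h : IsMinStab 2 V η m) : IsMinStab 2 V η' m :=
  ⟨stab_congr hagree h.1,
   fun m' hm' => h.2 m' (stab_congr (fun v hv => (hagree v hv).symm) hm')⟩

lemma measurable_stabSet : MeasurableSet (StabSet 2) := by
  have h : StabSet 2 = ⋂ x : Pt, ⋃ C : ℕ, ⋂ V : Finset Pt,
      {η : Pt → ℕ | ∀ m, IsMinStab 2 V η m → x ∈ V → m x ≤ C} := by
    ext η
    constructor
    · intro hη
      simp only [Set.mem_iInter, Set.mem_iUnion, Set.mem_setOf_eq]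
      intro x
      obtain ⟨C, hC⟩ := hη x
      exact ⟨C, fun V m => hC V m⟩
    · intro hη
      simp only [Set.mem_iInter, Set.mem_iUnion, Set.mem_setOf_eq] at hη
      intro x
      obtain ⟨C, hC⟩ := hη x
      exact ⟨C, fun V m => hC V m⟩
  rw [h]
  exact MeasurableSet.iInter fun x => MeasurableSet.iUnion fun C =>
    MeasurableSet.iInter fun V => cylinder_measurable V _ (by
      intro η η' hagree hmem m hmin hxV
      exact hmem m (isMinStab_congr (fun v hv => (hagree v hv).symm) hmin) hxV)

lemma cylinder_bound (p : ℝ) (β : Measure (ℤ → ℕ)) (hβ : IsBernoulliField p β)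
    (S : Finset ℤ) :
    β {ω | ∀ z ∈ S, ω z ≠ 1} ≤ ENNReal.ofReal (1 - p) ^ S.card := by
  classical
  set ex : ((↥S) → ℕ) → (ℤ → ℕ) := fun g z => if h : z ∈ S then g ⟨z, h⟩ else 0 with hex
  set D : ((↥S) → ℕ) → Set (ℤ → ℕ) := fun g =>
    if ∀ s, g s ≠ 1 then {ω | ∀ z ∈ S, ω z = ex g z} else ∅ with hD
  have hcover : {ω : ℤ → ℕ | ∀ z ∈ S, ω z ≠ 1} ⊆ ⋃ g, D g := by
    intro ω hω
    refine Set.mem_iUnion.2 ⟨fun s => ω ↑s, ?_⟩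
    rw [hD]
    simp only []
    rw [if_pos (show ∀ s : ↥S, (fun s : ↥S => ω ↑s) s ≠ 1 from fun s => hω ↑s s.2)]
    intro z hz
    rw [hex]
    simp only []
    rw [dif_pos hz]
  have hle : β {ω | ∀ z ∈ S, ω z ≠ 1} ≤ ∑' g : (↥S) → ℕ, β (D g) :=
    (measure_mono hcover).trans (measure_iUnion_le D)
  have heval : ∀ g : (↥S) → ℕ, g ≠ (fun _ => 0) → β (D g) = 0 := by
    intro g hg
    rw [hD]
    simp only []
    split_ifs with hpred
    · rw [hβ.2 S (ex g)]
      have hex0 : ∃ s : ↥S, g s ≠ 0 := by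
        by_contra hco
        push_neg at hco
        exact hg (funext hco)
      obtain ⟨s, hs⟩ := hex0
      apply Finset.prod_eq_zero (s.2 : (s : ℤ) ∈ S)
      have he : ex g ↑s = g s := by
        rw [hex]
        simp only []
        rw [dif_pos s.2]
      rw [he, if_neg (hpred s), if_neg hs]
    · exact measure_empty
  have htsum : ∑' g : (↥S) → ℕ, β (D g) = β (D (fun _ => 0)) := tsum_eq_single _ heval
  have hval : β (D (fun _ => 0)) = ENNReal.ofReal (1 - p) ^ S.card := by
    rw [hD]
    simp only []
    rw [if_pos (fun s => by norm_num)]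
    rw [hβ.2 S (ex (fun _ => 0))]
    have hcongr : ∀ z ∈ S,
        (if ex (fun _ => 0) z = 1 then ENNReal.ofReal p
          else if ex (fun _ => 0) z = 0 then ENNReal.ofReal (1 - p) else 0)
        = ENNReal.ofReal (1 - p) := by
      intro z hz
      have he : ex (fun _ => 0) z = 0 := by
        rw [hex]
        simp only []
        rw [dif_pos hz]
      rw [he]
      norm_num
    rw [Finset.prod_congr rfl hcongr, Finset.prod_const]
  exact hle.trans (le_of_eq (htsum.trans hval))

lemma bad_null (p : ℝ) (hp : 0 < p) (β : Measure (ℤ → ℕ)) (hβ : IsBernoulliField p β) :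
    β {ω | ¬ Good ω} = 0 := by
  have hr : ENNReal.ofReal (1 - p) < 1 := by
    rw [ENNReal.ofReal_lt_one]
    linarith
  have htend := ENNReal.tendsto_pow_atTop_nhds_zero_of_lt_one hr
  have hright : ∀ n : ℤ, β {ω | ¬ ∃ z, n < z ∧ ω z = 1} = 0 := by
    intro n
    have hb : ∀ M : ℕ, β {ω | ¬ ∃ z, n < z ∧ ω z = 1} ≤ ENNReal.ofReal (1 - p) ^ M := by
      intro M
      have hsub : {ω : ℤ → ℕ | ¬ ∃ z, n < z ∧ ω z = 1} ⊆
          {ω | ∀ z ∈ Finset.Icc (n + 1) (n + M), ω z ≠ 1} := by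
        intro ω hω z hz h1
        rw [Finset.mem_Icc] at hz
        exact hω ⟨z, by omega, h1⟩
      have hcard : (Finset.Icc (n + 1) (n + M)).card = M := by
        rw [Int.card_Icc]
        omega
      calc β _ ≤ β {ω | ∀ z ∈ Finset.Icc (n + 1) (n + M), ω z ≠ 1} := measure_mono hsub
        _ ≤ ENNReal.ofReal (1 - p) ^ (Finset.Icc (n + 1) (n + M)).card :=
            cylinder_bound p β hβ _
        _ = ENNReal.ofReal (1 - p) ^ M := by rw [hcard]
    exact le_antisymm (ge_of_tendsto' htend hb) zero_le
  have hleft : ∀ n : ℤ, β {ω | ¬ ∃ z, z < n ∧ ω z = 1} = 0 := by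
    intro n
    have hb : ∀ M : ℕ, β {ω | ¬ ∃ z, z < n ∧ ω z = 1} ≤ ENNReal.ofReal (1 - p) ^ M := by
      intro M
      have hsub : {ω : ℤ → ℕ | ¬ ∃ z, z < n ∧ ω z = 1} ⊆
          {ω | ∀ z ∈ Finset.Icc (n - M) (n - 1), ω z ≠ 1} := by
        intro ω hω z hz h1
        rw [Finset.mem_Icc] at hz
        exact hω ⟨z, by omega, h1⟩
      have hcard : (Finset.Icc (n - M) (n - 1)).card = M := by
        rw [Int.card_Icc]
        omega
      calc β _ ≤ β {ω | ∀ z ∈ Finset.Icc (n - M) (n - 1), ω z ≠ 1} := measure_mono hsub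
        _ ≤ ENNReal.ofReal (1 - p) ^ (Finset.Icc (n - M) (n - 1)).card :=
            cylinder_bound p β hβ _
        _ = ENNReal.ofReal (1 - p) ^ M := by rw [hcard]
    exact le_antisymm (ge_of_tendsto' htend hb) zero_le
  have hdecomp : {ω : ℤ → ℕ | ¬ Good ω} ⊆
      ⋃ n : ℤ, ({ω | ¬ ∃ z, n < z ∧ ω z = 1} ∪ {ω | ¬ ∃ z, z < n ∧ ω z = 1}) := by
    intro ω hω
    rw [Set.mem_setOf_eq, Good, not_forall] at hω
    obtain ⟨n, hn⟩ := hω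
    refine Set.mem_iUnion.2 ⟨n, ?_⟩
    by_cases hP : ∃ z, n < z ∧ ω z = 1
    · exact Or.inr (fun hQ => hn ⟨hP, hQ⟩)
    · exact Or.inl hP
  have hmain : β {ω | ¬ Good ω} ≤ 0 := by
    calc β {ω | ¬ Good ω}
        ≤ ∑' n : ℤ, β ({ω | ¬ ∃ z, n < z ∧ ω z = 1} ∪ {ω | ¬ ∃ z, z < n ∧ ω z = 1}) :=
          (measure_mono hdecomp).trans (measure_iUnion_le _)
      _ = 0 := by
          have hz : ∀ n : ℤ,
              β ({ω | ¬ ∃ z, n < z ∧ ω z = 1} ∪ {ω | ¬ ∃ z, z < n ∧ ω z = 1}) = 0 := by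
            intro n
            apply le_antisymm _ zero_le
            calc β _ ≤ β {ω | ¬ ∃ z, n < z ∧ ω z = 1} + β {ω | ¬ ∃ z, z < n ∧ ω z = 1} :=
                  measure_union_le _ _
              _ = 0 := by rw [hright n, hleft n, add_zero]
          rw [tsum_congr hz, tsum_zero]
  exact le_antisymm hmain zero_le
end
end SandpileAux

open SandpileAux in
/-- adding the random field `ζ(x,y) = ω(x) + ω'(y)` (with `ω, ω'` independent
Bernoulli(p) fields on `ℤ`) to a configuration `η` distributed according to a translation
invariant measure `μ'` concentrated on the recurrent set `ℛ` yields an almost surely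
non-stabilizable configuration; in particular the law `μ'_p` of `η + ζ` is not stabilizable. -/
theorem add_bernoulli_lines_not_stabilizable (p : ℝ) (hp : 0 < p) (hp1 : p ≤ 1)
    (μ' : Measure ((Fin 2 → ℤ) → ℕ)) [IsProbabilityMeasure μ']
    (hstat : Stationary 2 μ') (hrec : μ' (RecSet 2) = 1)
    (β : Measure (ℤ → ℕ)) (hβ : IsBernoulliField p β) :
    (μ'.prod (β.prod β))
        {q : ((Fin 2 → ℤ) → ℕ) × ((ℤ → ℕ) × (ℤ → ℕ)) |
          Stabilizable 2 (fun x => q.1 x + q.2.1 (x 0) + q.2.2 (x 1))} = 0 ∧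
    ((μ'.prod (β.prod β)).map
        (fun q : ((Fin 2 → ℤ) → ℕ) × ((ℤ → ℕ) × (ℤ → ℕ)) =>
          (fun x => q.1 x + q.2.1 (x 0) + q.2.2 (x 1)))) (StabSet 2) ≠ 1 := by
  classical
  haveI hprobβ : IsProbabilityMeasure β := hβ.1
  have hBadnull : β {ω | ¬ Good ω} = 0 := bad_null p hp β hβ
  have hmap1 : (μ'.prod (β.prod β)).map
      (fun q : (((Fin 2 → ℤ) → ℕ) × ((ℤ → ℕ) × (ℤ → ℕ))) => q.2.1) = β := by
    have h1 : (fun q : (((Fin 2 → ℤ) → ℕ) × ((ℤ → ℕ) × (ℤ → ℕ))) => q.2.1) =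
        (Prod.fst ∘ Prod.snd) := rfl
    rw [h1, ← Measure.map_map measurable_fst measurable_snd,
        Measure.map_snd_prod, measure_univ, one_smul,
        Measure.map_fst_prod, measure_univ, one_smul]
  have hmap2 : (μ'.prod (β.prod β)).map
      (fun q : (((Fin 2 → ℤ) → ℕ) × ((ℤ → ℕ) × (ℤ → ℕ))) => q.2.2) = β := by
    have h1 : (fun q : (((Fin 2 → ℤ) → ℕ) × ((ℤ → ℕ) × (ℤ → ℕ))) => q.2.2) =
        (Prod.snd ∘ Prod.snd) := rfl
    rw [h1, ← Measure.map_map measurable_snd measurable_snd,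
        Measure.map_snd_prod, measure_univ, one_smul,
        Measure.map_snd_prod, measure_univ, one_smul]
  have hA : (μ'.prod (β.prod β)) (Prod.fst ⁻¹' (RecSet 2)ᶜ) = 0 := by
    rw [← Measure.map_apply measurable_fst measurable_recSet.compl]
    rw [Measure.map_fst_prod, measure_univ, one_smul]
    rw [measure_compl measurable_recSet (measure_ne_top _ _), hrec, measure_univ]
    simp
  have hB1 : (μ'.prod (β.prod β))
      ((fun q : (((Fin 2 → ℤ) → ℕ) × ((ℤ → ℕ) × (ℤ → ℕ))) => q.2.1) ⁻¹' {ω | ¬ Good ω})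
        = 0 := by
    apply le_antisymm _ zero_le
    have hsub : (fun q : (((Fin 2 → ℤ) → ℕ) × ((ℤ → ℕ) × (ℤ → ℕ))) => q.2.1) ⁻¹'
          {ω | ¬ Good ω} ⊆
        (fun q : (((Fin 2 → ℤ) → ℕ) × ((ℤ → ℕ) × (ℤ → ℕ))) => q.2.1) ⁻¹'
          (toMeasurable β {ω | ¬ Good ω}) :=
      Set.preimage_mono (subset_toMeasurable β _)
    have heq : (μ'.prod (β.prod β))
        ((fun q : (((Fin 2 → ℤ) → ℕ) × ((ℤ → ℕ) × (ℤ → ℕ))) => q.2.1) ⁻¹'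
          (toMeasurable β {ω | ¬ Good ω})) = 0 := by
      rw [← Measure.map_apply
        (show Measurable (fun q : (((Fin 2 → ℤ) → ℕ) × ((ℤ → ℕ) × (ℤ → ℕ)))
          => q.2.1) from measurable_fst.comp measurable_snd)
        (measurableSet_toMeasurable β _)]
      rw [hmap1, measure_toMeasurable, hBadnull]
    exact (measure_mono hsub).trans_eq heq
  have hB2 : (μ'.prod (β.prod β))
      ((fun q : (((Fin 2 → ℤ) → ℕ) × ((ℤ → ℕ) × (ℤ → ℕ))) => q.2.2) ⁻¹' {ω | ¬ Good ω})
        = 0 := by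
    apply le_antisymm _ zero_le
    have hsub : (fun q : (((Fin 2 → ℤ) → ℕ) × ((ℤ → ℕ) × (ℤ → ℕ))) => q.2.2) ⁻¹'
          {ω | ¬ Good ω} ⊆
        (fun q : (((Fin 2 → ℤ) → ℕ) × ((ℤ → ℕ) × (ℤ → ℕ))) => q.2.2) ⁻¹'
          (toMeasurable β {ω | ¬ Good ω}) :=
      Set.preimage_mono (subset_toMeasurable β _)
    have heq : (μ'.prod (β.prod β))
        ((fun q : (((Fin 2 → ℤ) → ℕ) × ((ℤ → ℕ) × (ℤ → ℕ))) => q.2.2) ⁻¹'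
          (toMeasurable β {ω | ¬ Good ω})) = 0 := by
      rw [← Measure.map_apply
        (show Measurable (fun q : (((Fin 2 → ℤ) → ℕ) × ((ℤ → ℕ) × (ℤ → ℕ)))
          => q.2.2) from measurable_snd.comp measurable_snd)
        (measurableSet_toMeasurable β _)]
      rw [hmap2, measure_toMeasurable, hBadnull]
    exact (measure_mono hsub).trans_eq heq
  have hEsub : {q : ((Fin 2 → ℤ) → ℕ) × ((ℤ → ℕ) × (ℤ → ℕ)) |
      Stabilizable 2 (fun x => q.1 x + q.2.1 (x 0) + q.2.2 (x 1))} ⊆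
      (Prod.fst ⁻¹' (RecSet 2)ᶜ ∪
        (fun q : (((Fin 2 → ℤ) → ℕ) × ((ℤ → ℕ) × (ℤ → ℕ))) => q.2.1) ⁻¹' {ω | ¬ Good ω}) ∪
        (fun q : (((Fin 2 → ℤ) → ℕ) × ((ℤ → ℕ) × (ℤ → ℕ))) => q.2.2) ⁻¹' {ω | ¬ Good ω} := by
    intro q hq
    by_cases h1 : q.1 ∈ RecSet 2
    · by_cases h2 : Good q.2.1
      · by_cases h3 : Good q.2.2
        · exact absurd hq (good_not_stabilizable q.1 q.2.1 q.2.2 h1 h2 h3)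
        · exact Or.inr h3
      · exact Or.inl (Or.inr h2)
    · exact Or.inl (Or.inl h1)
  have hmain : (μ'.prod (β.prod β))
      {q : ((Fin 2 → ℤ) → ℕ) × ((ℤ → ℕ) × (ℤ → ℕ)) |
        Stabilizable 2 (fun x => q.1 x + q.2.1 (x 0) + q.2.2 (x 1))} = 0 := by
    apply le_antisymm _ zero_le
    calc (μ'.prod (β.prod β)) {q : ((Fin 2 → ℤ) → ℕ) × ((ℤ → ℕ) × (ℤ → ℕ)) |
        Stabilizable 2 (fun x => q.1 x + q.2.1 (x 0) + q.2.2 (x 1))}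
        ≤ (μ'.prod (β.prod β)) ((Prod.fst ⁻¹' (RecSet 2)ᶜ ∪
            (fun q : (((Fin 2 → ℤ) → ℕ) × ((ℤ → ℕ) × (ℤ → ℕ))) => q.2.1) ⁻¹'
              {ω | ¬ Good ω}) ∪
            (fun q : (((Fin 2 → ℤ) → ℕ) × ((ℤ → ℕ) × (ℤ → ℕ))) => q.2.2) ⁻¹'
              {ω | ¬ Good ω}) := measure_mono hEsub
      _ ≤ (μ'.prod (β.prod β)) (Prod.fst ⁻¹' (RecSet 2)ᶜ ∪
            (fun q : (((Fin 2 → ℤ) → ℕ) × ((ℤ → ℕ) × (ℤ → ℕ))) => q.2.1) ⁻¹'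
              {ω | ¬ Good ω}) +
          (μ'.prod (β.prod β))
            ((fun q : (((Fin 2 → ℤ) → ℕ) × ((ℤ → ℕ) × (ℤ → ℕ))) => q.2.2) ⁻¹'
              {ω | ¬ Good ω}) := measure_union_le _ _
      _ ≤ ((μ'.prod (β.prod β)) (Prod.fst ⁻¹' (RecSet 2)ᶜ) +
          (μ'.prod (β.prod β))
            ((fun q : (((Fin 2 → ℤ) → ℕ) × ((ℤ → ℕ) × (ℤ → ℕ))) => q.2.1) ⁻¹'
              {ω | ¬ Good ω})) +
          (μ'.prod (β.prod β))
            ((fun q : (((Fin 2 → ℤ) → ℕ) × ((ℤ → ℕ) × (ℤ → ℕ))) => q.2.2) ⁻¹'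
              {ω | ¬ Good ω}) := add_le_add (measure_union_le _ _) le_rfl
      _ = 0 := by rw [hA, hB1, hB2]; simp
  refine ⟨hmain, ?_⟩
  have hTm : Measurable (fun q : ((Fin 2 → ℤ) → ℕ) × ((ℤ → ℕ) × (ℤ → ℕ)) =>
      (fun x => q.1 x + q.2.1 (x 0) + q.2.2 (x 1) : (Fin 2 → ℤ) → ℕ)) := by
    apply measurable_pi_iff.2
    intro x
    apply Measurable.add
    · apply Measurable.add
      · exact (measurable_pi_apply x).comp measurable_fst
      · exact (measurable_pi_apply (x 0)).comp (measurable_fst.comp measurable_snd)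
    · exact (measurable_pi_apply (x 1)).comp (measurable_snd.comp measurable_snd)
  rw [Measure.map_apply hTm measurable_stabSet]
  have hpre : (fun q : ((Fin 2 → ℤ) → ℕ) × ((ℤ → ℕ) × (ℤ → ℕ)) =>
      (fun x => q.1 x + q.2.1 (x 0) + q.2.2 (x 1) : (Fin 2 → ℤ) → ℕ)) ⁻¹' StabSet 2 =
      {q : ((Fin 2 → ℤ) → ℕ) × ((ℤ → ℕ) × (ℤ → ℕ)) |
        Stabilizable 2 (fun x => q.1 x + q.2.1 (x 0) + q.2.2 (x 1))} := rfl
  rw [hpre, hmain]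
  exact zero_ne_one
end

section
/- Let d ≥ 1 and let ν be a stationary, ergodic probability measure on height configurations on ℤ^d with ∫ η(0) dν > 2d. Then ν-almost every configuration η is not weakly stabilizable: almost surely there exist no m : ℤ^d → ℕ and stable ξ : ℤ^d → ℕ with η(x) − (Δm)(x) = ξ(x) for all x ∈ ℤ^d. -/
open MeasureTheory
open scoped ENNReal

/-- The infinite-volume toppling operator `(Δ m)(x)`. -/
def lapInf (d : ℕ) (m : (Fin d → ℤ) → ℕ) (x : Fin d → ℤ) : ℤ :=
  2 * d * (m x : ℤ) -
    ∑ i : Fin d,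
      ((m (Function.update x i (x i + 1)) : ℤ) + (m (Function.update x i (x i - 1)) : ℤ))

/-- `η` is weakly stabilizable: `η - Δm = ξ` for some `m : ℤ^d → ℕ` and stable `ξ`. -/
def WeaklyStabilizable (d : ℕ) (η : (Fin d → ℤ) → ℕ) : Prop :=
  ∃ (m ξ : (Fin d → ℤ) → ℕ), (∀ x, ξ x ≤ 2 * d) ∧ ∀ x, (η x : ℤ) - lapInf d m x = (ξ x : ℤ)


namespace SandAux

/-- Sum of `m` over the `2d` neighbours of `x`. -/
def nbrSum (d : ℕ) (m : (Fin d → ℤ) → ℕ) (x : Fin d → ℤ) : ℕ :=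
  ∑ i : Fin d, (m (Function.update x i (x i + 1)) + m (Function.update x i (x i - 1)))

/-- Monotone iteration converging to the minimal admissible toppling function. -/
def mseq (d : ℕ) : ℕ → ((Fin d → ℤ) → ℕ) → (Fin d → ℤ) → ℕ
  | 0, _, _ => 0
  | k + 1, η, x => (η x + nbrSum d (mseq d k η) x - 1) / (2 * d)

lemma divkey (d : ℕ) (hd : 1 ≤ d) (t v : ℕ) :
    (t - 1) / (2 * d) ≤ v ↔ t ≤ 2 * d * v + 2 * d := by
  rw [Nat.div_le_iff_le_mul_add_pred (by omega)]
  omega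

lemma mseq_succ (d : ℕ) (k : ℕ) (η : (Fin d → ℤ) → ℕ) (x : Fin d → ℤ) :
    mseq d (k + 1) η x = (η x + nbrSum d (mseq d k η) x - 1) / (2 * d) := rfl

lemma step_lower (d : ℕ) (hd : 1 ≤ d) (k : ℕ) (η : (Fin d → ℤ) → ℕ) (x : Fin d → ℤ) :
    η x + nbrSum d (mseq d k η) x ≤ 2 * d * mseq d (k + 1) η x + 2 * d :=
  (divkey d hd _ _).mp (le_of_eq (mseq_succ d k η x).symm)

lemma mseq_mono (d : ℕ) (η : (Fin d → ℤ) → ℕ) :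
    ∀ k x, mseq d k η x ≤ mseq d (k + 1) η x := by
  intro k
  induction k with
  | zero => intro x; exact Nat.zero_le _
  | succ k ih =>
    intro x
    rw [mseq_succ, mseq_succ]
    apply Nat.div_le_div_right
    apply Nat.sub_le_sub_right
    apply Nat.add_le_add_left
    exact Finset.sum_le_sum fun i _ => Nat.add_le_add (ih _) (ih _)

lemma mseq_mono' (d : ℕ) (η : (Fin d → ℤ) → ℕ) (x : Fin d → ℤ) :
    Monotone fun k => mseq d k η x :=
  monotone_nat_of_le_succ fun k => mseq_mono d η k x

lemma dominate (d : ℕ) (hd : 1 ≤ d) (η m : (Fin d → ℤ) → ℕ)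
    (hadm : ∀ x, η x + nbrSum d m x ≤ 2 * d * m x + 2 * d) :
    ∀ k x, mseq d k η x ≤ m x := by
  intro k
  induction k with
  | zero => intro x; exact Nat.zero_le _
  | succ k ih =>
    intro x
    rw [mseq_succ]
    refine (divkey d hd _ _).mpr (le_trans ?_ (hadm x))
    apply Nat.add_le_add_left
    exact Finset.sum_le_sum fun i _ => Nat.add_le_add (ih _) (ih _)

lemma update_add (d : ℕ) (x z : Fin d → ℤ) (i : Fin d) (c : ℤ) :
    Function.update (x + z) i ((x + z) i + c) = Function.update x i (x i + c) + z := by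
  funext j
  rcases eq_or_ne j i with h | h
  · subst h; simp [Function.update_self]; ring
  · simp [Function.update_of_ne h]

lemma update_sub (d : ℕ) (x z : Fin d → ℤ) (i : Fin d) (c : ℤ) :
    Function.update (x + z) i ((x + z) i - c) = Function.update x i (x i - c) + z := by
  funext j
  rcases eq_or_ne j i with h | h
  · subst h; simp [Function.update_self]; ring
  · simp [Function.update_of_ne h]

lemma mseq_shift (d : ℕ) (z : Fin d → ℤ) (η : (Fin d → ℤ) → ℕ) :
    ∀ k x, mseq d k (shiftC d z η) x = mseq d k η (x + z) := by
  intro k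
  induction k with
  | zero => intro x; rfl
  | succ k ih =>
    intro x
    rw [mseq_succ, mseq_succ]
    have h1 : shiftC d z η x = η (x + z) := rfl
    have h2 : nbrSum d (mseq d k (shiftC d z η)) x = nbrSum d (mseq d k η) (x + z) := by
      unfold nbrSum
      refine Finset.sum_congr rfl fun i _ => ?_
      rw [ih, ih, update_add, update_sub]
    rw [h1, h2]

lemma measurable_mseq (d : ℕ) :
    ∀ k x, Measurable fun η : (Fin d → ℤ) → ℕ => mseq d k η x := by
  intro k
  induction k with
  | zero => intro x; exact measurable_const
  | succ k ih =>
    intro x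
    have hs : Measurable fun η : (Fin d → ℤ) → ℕ => nbrSum d (mseq d k η) x := by
      apply Finset.measurable_sum
      intro i _
      exact (ih _).add (ih _)
    have : Measurable fun η : (Fin d → ℤ) → ℕ =>
        η x + nbrSum d (mseq d k η) x := (measurable_pi_apply x).add hs
    exact (measurable_from_top (f := fun n : ℕ => (n - 1) / (2 * d))).comp this

/-- Admissibility of a weak-stabilization witness. -/
lemma adm_of_weak (d : ℕ) (η m ξ : (Fin d → ℤ) → ℕ) (hξ : ∀ x, ξ x ≤ 2 * d)
    (heq : ∀ x, (η x : ℤ) - (2 * d * (m x : ℤ) -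
      ∑ i : Fin d,
        ((m (Function.update x i (x i + 1)) : ℤ) + (m (Function.update x i (x i - 1)) : ℤ)))
      = (ξ x : ℤ)) :
    ∀ x, η x + nbrSum d m x ≤ 2 * d * m x + 2 * d := by
  intro x
  have h := heq x
  have hs : ((nbrSum d m x : ℕ) : ℤ) =
      ∑ i : Fin d,
        ((m (Function.update x i (x i + 1)) : ℤ) + (m (Function.update x i (x i - 1)) : ℤ)) := by
    unfold nbrSum; push_cast; ring
  have hξx : (ξ x : ℤ) ≤ 2 * d := by exact_mod_cast hξ x
  have : (η x : ℤ) + (nbrSum d m x : ℤ) ≤ 2 * d * (m x : ℤ) + 2 * d := by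
    rw [hs]; omega
  exact_mod_cast this

lemma min_iSup_ennreal (f : ℕ → ℝ≥0∞) (N : ℝ≥0∞) :
    (⨆ k, min (f k) N) = min (⨆ k, f k) N := by
  refine le_antisymm (iSup_le fun k => min_le_min (le_iSup f k) le_rfl) ?_
  rcases lt_or_ge N (⨆ k, f k) with h | h
  · obtain ⟨k, hk⟩ := lt_iSup_iff.mp h
    rw [min_eq_right h.le]
    exact le_iSup_of_le k (by rw [min_eq_right hk.le])
  · rw [min_eq_left h]
    exact iSup_mono fun k => le_min le_rfl (le_trans (le_iSup f k) h)

/-- Truncated cast of `mseq`. -/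
noncomputable def tmin (d N k : ℕ) (η : (Fin d → ℤ) → ℕ) (y : Fin d → ℤ) : ℝ≥0∞ :=
  ((min (mseq d k η y) N : ℕ) : ℝ≥0∞)

lemma measurable_tmin (d N k : ℕ) (y : Fin d → ℤ) :
    Measurable fun η : (Fin d → ℤ) → ℕ => tmin d N k η y :=
  (measurable_from_top (f := fun n : ℕ => ((min n N : ℕ) : ℝ≥0∞))).comp (measurable_mseq d k y)

end SandAux

namespace SandAux

/-- The minimal admissible toppling function, as a `ℝ≥0∞`-valued sup. -/
noncomputable def Mfun (d : ℕ) (η : (Fin d → ℤ) → ℕ) (x : Fin d → ℤ) : ℝ≥0∞ :=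
  ⨆ k, (mseq d k η x : ℝ≥0∞)

lemma measurable_Mfun (d : ℕ) (x : Fin d → ℤ) :
    Measurable fun η => Mfun d η x :=
  Measurable.iSup fun k =>
    (measurable_from_top (f := fun n : ℕ => (n : ℝ≥0∞))).comp (measurable_mseq d k x)

lemma Mfun_shift (d : ℕ) (z : Fin d → ℤ) (η : (Fin d → ℤ) → ℕ) (x : Fin d → ℤ) :
    Mfun d (shiftC d z η) x = Mfun d η (x + z) := by
  unfold Mfun
  simp_rw [mseq_shift]

end SandAux


/-- a stationary ergodic measure with expected height `> 2d` gives measure zero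
to the weakly stabilizable configurations. -/
theorem not_weakly_stabilizable_of_density_gt_two_d (d : ℕ) (hd : 1 ≤ d)
    (ν : Measure ((Fin d → ℤ) → ℕ)) [IsProbabilityMeasure ν]
    (hH : ν (Heights d) = 1) (hstat : Stationary d ν) (herg : ErgodicShift d ν)
    (hdens : (2 * d : ℝ≥0∞) < ∫⁻ η, (η 0 : ℝ≥0∞) ∂ν) :
    ν {η | WeaklyStabilizable d η} = 0 := by
  classical
  obtain ⟨measmseq, measM⟩ :
      (∀ k x, Measurable fun η : (Fin d → ℤ) → ℕ => SandAux.mseq d k η x) ∧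
      (∀ x : Fin d → ℤ, Measurable fun η => SandAux.Mfun d η x) :=
    ⟨SandAux.measurable_mseq d, SandAux.measurable_Mfun d⟩
  set W : Set ((Fin d → ℤ) → ℕ) := {η | ∀ x, SandAux.Mfun d η x ≠ ∞} with hWdef
  have hWmeas : MeasurableSet W := by
    have : W = ⋂ x, {η | SandAux.Mfun d η x ≠ ∞} := by
      ext η; simp [hWdef, Set.mem_iInter]
    rw [this]
    refine MeasurableSet.iInter fun x => ?_
    exact ((measM x) (measurableSet_singleton ∞)).compl
  have hWinv : ∀ z, shiftC d z ⁻¹' W = W := by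
    intro z
    ext η
    simp only [Set.mem_preimage, hWdef, Set.mem_setOf_eq, SandAux.Mfun_shift]
    constructor
    · intro h x
      have := h (x - z)
      simpa using this
    · intro h x
      exact h (x + z)
  have hsub : {η | WeaklyStabilizable d η} ⊆ W := by
    intro η hη
    obtain ⟨m, ξ, hξ, heq⟩ := hη
    have hadm : ∀ x, η x + SandAux.nbrSum d m x ≤ 2 * d * m x + 2 * d :=
      SandAux.adm_of_weak d η m ξ hξ (by intro x; simpa [lapInf] using heq x)
    intro x
    have hle : SandAux.Mfun d η x ≤ (m x : ℝ≥0∞) :=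
      iSup_le fun k => Nat.cast_le.mpr (SandAux.dominate d hd η m hadm k x)
    exact ne_top_of_le_ne_top (ENNReal.natCast_ne_top _) hle
  rcases herg W hWmeas hWinv with h0 | h1
  · exact le_antisymm (h0 ▸ measure_mono hsub) zero_le
  exfalso
  -- measurability of the truncated indicator
  have measind : ∀ N : ℕ,
      Measurable fun η : (Fin d → ℤ) → ℕ =>
        (if SandAux.Mfun d η 0 ≤ (N : ℝ≥0∞) then (η 0 : ℝ≥0∞) else 0) := by
    intro N
    have hset : MeasurableSet {η : (Fin d → ℤ) → ℕ | SandAux.Mfun d η 0 ≤ (N : ℝ≥0∞)} :=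
      measurableSet_le (measM 0) measurable_const
    exact Measurable.ite hset
      ((measurable_from_top (f := fun n : ℕ => (n : ℝ≥0∞))).comp (measurable_pi_apply 0))
      measurable_const
  -- the key integral bound
  have key : ∀ N : ℕ,
      (∫⁻ η, (if SandAux.Mfun d η 0 ≤ (N : ℝ≥0∞) then (η 0 : ℝ≥0∞) else 0) ∂ν)
        ≤ 2 * (d : ℝ≥0∞) := by
    intro N
    set I : ℝ≥0∞ :=
      ∫⁻ η, (if SandAux.Mfun d η 0 ≤ (N : ℝ≥0∞) then (η 0 : ℝ≥0∞) else 0) ∂ν with hI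
    set c : ℕ → ℝ≥0∞ :=
      fun k => ∫⁻ η, SandAux.tmin d N k η 0 ∂ν with hc
    have measmin := SandAux.measurable_tmin d N
    have htrans : ∀ (k : ℕ) (y : Fin d → ℤ),
        (∫⁻ η, SandAux.tmin d N k η y ∂ν) = c k := by
      intro k y
      have h := (hstat y).lintegral_comp (measmin k 0)
      have e : (∫⁻ η, SandAux.tmin d N k η y ∂ν)
          = ∫⁻ η, SandAux.tmin d N k (shiftC d y η) 0 ∂ν := by
        refine lintegral_congr fun η => ?_
        unfold SandAux.tmin
        rw [SandAux.mseq_shift, zero_add]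
      exact e.trans h
    -- pointwise inequality
    have star : ∀ (k : ℕ) (η : (Fin d → ℤ) → ℕ),
        (if SandAux.Mfun d η 0 ≤ (N : ℝ≥0∞) then (η 0 : ℝ≥0∞) else 0)
          + ∑ i : Fin d,
            (SandAux.tmin d N k η (Function.update (0 : Fin d → ℤ) i ((0 : Fin d → ℤ) i + 1))
              + SandAux.tmin d N k η (Function.update (0 : Fin d → ℤ) i ((0 : Fin d → ℤ) i - 1)))
        ≤ 2 * (d : ℝ≥0∞) * SandAux.tmin d N (k + 1) η 0 + 2 * (d : ℝ≥0∞) := by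
      intro k η
      by_cases h : SandAux.mseq d (k + 1) η 0 ≤ N
      · have hmin : SandAux.tmin d N (k + 1) η 0 = ((SandAux.mseq d (k + 1) η 0 : ℕ) : ℝ≥0∞) := by
          unfold SandAux.tmin; rw [min_eq_left h]
        have hb : (if SandAux.Mfun d η 0 ≤ (N : ℝ≥0∞) then (η 0 : ℝ≥0∞) else 0)
            ≤ (η 0 : ℝ≥0∞) := by split_ifs <;> simp
        calc _ ≤ (η 0 : ℝ≥0∞) + ∑ i : Fin d,
              (((SandAux.mseq d k η
                  (Function.update (0 : Fin d → ℤ) i ((0 : Fin d → ℤ) i + 1)) : ℕ) : ℝ≥0∞)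
                + ((SandAux.mseq d k η
                  (Function.update (0 : Fin d → ℤ) i ((0 : Fin d → ℤ) i - 1)) : ℕ) : ℝ≥0∞)) := by
              refine add_le_add hb (Finset.sum_le_sum fun i _ => add_le_add ?_ ?_) <;>
                exact Nat.cast_le.mpr (min_le_left _ _)
          _ = ((η 0 + SandAux.nbrSum d (SandAux.mseq d k η) 0 : ℕ) : ℝ≥0∞) := by
              rw [SandAux.nbrSum]; push_cast; ring
          _ ≤ ((2 * d * SandAux.mseq d (k + 1) η 0 + 2 * d : ℕ) : ℝ≥0∞) :=
              Nat.cast_le.mpr (SandAux.step_lower d hd k η 0)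
          _ = _ := by rw [hmin]; push_cast; ring
      · have hN : (N : ℝ≥0∞) < SandAux.Mfun d η 0 := by
          refine lt_of_lt_of_le ?_
            (le_iSup (fun j => ((SandAux.mseq d j η 0 : ℕ) : ℝ≥0∞)) (k + 1))
          exact_mod_cast Nat.lt_of_not_le h
        have hmin : SandAux.tmin d N (k + 1) η 0 = (N : ℝ≥0∞) := by
          unfold SandAux.tmin; rw [min_eq_right (le_of_not_ge h)]
        rw [if_neg (not_le.mpr hN), hmin, zero_add]
        calc _ ≤ ∑ _i : Fin d, ((N : ℝ≥0∞) + (N : ℝ≥0∞)) := by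
              refine Finset.sum_le_sum fun i _ => add_le_add ?_ ?_ <;>
                exact Nat.cast_le.mpr (min_le_right _ _)
          _ = 2 * (d : ℝ≥0∞) * (N : ℝ≥0∞) := by
              simp [Finset.sum_const, Finset.card_univ]; ring
          _ ≤ _ := le_self_add
    -- integrate the pointwise inequality
    have istar : ∀ k : ℕ,
        I + 2 * (d : ℝ≥0∞) * c k ≤ 2 * (d : ℝ≥0∞) * c (k + 1) + 2 * (d : ℝ≥0∞) := by
      intro k
      have hL : (∫⁻ η,
          ((if SandAux.Mfun d η 0 ≤ (N : ℝ≥0∞) then (η 0 : ℝ≥0∞) else 0)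
          + ∑ i : Fin d,
            (SandAux.tmin d N k η (Function.update (0 : Fin d → ℤ) i ((0 : Fin d → ℤ) i + 1))
              + SandAux.tmin d N k η
                  (Function.update (0 : Fin d → ℤ) i ((0 : Fin d → ℤ) i - 1)))) ∂ν)
          = I + 2 * (d : ℝ≥0∞) * c k := by
        rw [lintegral_add_left (measind N)]
        rw [lintegral_finset_sum (f := fun (i : Fin d) (η : (Fin d → ℤ) → ℕ) =>
          SandAux.tmin d N k η (Function.update (0 : Fin d → ℤ) i ((0 : Fin d → ℤ) i + 1))
            + SandAux.tmin d N k η (Function.update (0 : Fin d → ℤ) i ((0 : Fin d → ℤ) i - 1)))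
          _ (fun i _ => ((measmin k _).add (measmin k _)))]
        congr 1
        have hterm : ∀ i : Fin d, (∫⁻ η,
            (SandAux.tmin d N k η (Function.update (0 : Fin d → ℤ) i ((0 : Fin d → ℤ) i + 1))
              + SandAux.tmin d N k η
                  (Function.update (0 : Fin d → ℤ) i ((0 : Fin d → ℤ) i - 1))) ∂ν)
            = c k + c k := by
          intro i
          rw [lintegral_add_left (measmin k _), htrans k _, htrans k _]
        rw [Finset.sum_congr rfl fun i _ => hterm i]
        rw [Finset.sum_const, Finset.card_univ, Fintype.card_fin, nsmul_eq_mul]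
        ring
      have hR : (∫⁻ η,
          (2 * (d : ℝ≥0∞) * SandAux.tmin d N (k + 1) η 0 + 2 * (d : ℝ≥0∞)) ∂ν)
          = 2 * (d : ℝ≥0∞) * c (k + 1) + 2 * (d : ℝ≥0∞) := by
        rw [lintegral_add_right _ measurable_const,
          lintegral_const_mul _ (measmin (k + 1) 0), lintegral_const, measure_univ, mul_one]
      calc I + 2 * (d : ℝ≥0∞) * c k = _ := hL.symm
        _ ≤ _ := lintegral_mono fun η => star k η
        _ = _ := hR
    -- pass to the limit in k
    set cInf : ℝ≥0∞ := ∫⁻ η, min (SandAux.Mfun d η 0) (N : ℝ≥0∞) ∂ν with hcInf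
    have castmin : ∀ (a b : ℕ), ((min a b : ℕ) : ℝ≥0∞) = min (a : ℝ≥0∞) (b : ℝ≥0∞) :=
      fun a b => Nat.mono_cast.map_min
    have hck : ∀ k, c k ≤ cInf := by
      intro k
      refine lintegral_mono fun η => ?_
      unfold SandAux.tmin
      rw [castmin]
      exact min_le_min (le_iSup (fun j => ((SandAux.mseq d j η 0 : ℕ) : ℝ≥0∞)) k) le_rfl
    have supc : (⨆ k, c k) = cInf := by
      have h1 : (⨆ k, c k) = ∫⁻ η, ⨆ k, SandAux.tmin d N k η 0 ∂ν := by
        refine (lintegral_iSup (fun k => measmin k 0) ?_).symm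
        intro k j hkj η
        exact Nat.cast_le.mpr (min_le_min (SandAux.mseq_mono' d η 0 hkj) le_rfl)
      rw [h1]
      refine lintegral_congr fun η => ?_
      unfold SandAux.tmin
      simp_rw [castmin]
      exact SandAux.min_iSup_ennreal _ _
    have hcfin : cInf ≠ ∞ := by
      have hle : cInf ≤ (N : ℝ≥0∞) := by
        calc cInf ≤ ∫⁻ _η, (N : ℝ≥0∞) ∂ν := lintegral_mono fun η => min_le_right _ _
          _ = (N : ℝ≥0∞) := by simp
      exact ne_top_of_le_ne_top (ENNReal.natCast_ne_top N) hle
    have hfin : 2 * (d : ℝ≥0∞) * cInf ≠ ∞ :=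
      ENNReal.mul_ne_top (ENNReal.mul_ne_top (by simp) (ENNReal.natCast_ne_top d)) hcfin
    have step : ∀ k : ℕ,
        I + 2 * (d : ℝ≥0∞) * c k ≤ 2 * (d : ℝ≥0∞) + 2 * (d : ℝ≥0∞) * cInf := by
      intro k
      refine (istar k).trans ?_
      rw [add_comm (2 * (d : ℝ≥0∞) * c (k + 1))]
      exact add_le_add le_rfl (mul_le_mul_right (hck (k + 1)) _)
    have final : I + 2 * (d : ℝ≥0∞) * cInf ≤ 2 * (d : ℝ≥0∞) + 2 * (d : ℝ≥0∞) * cInf := by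
      conv_lhs => rw [← supc]
      rw [ENNReal.mul_iSup, ENNReal.add_iSup]
      exact iSup_le step
    exact (ENNReal.add_le_add_iff_right hfin).mp final
  -- conclude by monotone convergence
  have haeW : ∀ᵐ η ∂ν, η ∈ W := by
    have hcompl : ν Wᶜ = 0 := by
      have := measure_compl hWmeas (measure_ne_top ν W)
      rw [h1, measure_univ] at this
      simpa using this
    exact (MeasureTheory.ae_iff (p := fun η => η ∈ W)).mpr (by exact hcompl)
  have congrae : (∫⁻ η, (η 0 : ℝ≥0∞) ∂ν)
      = ∫⁻ η, ⨆ N : ℕ, (if SandAux.Mfun d η 0 ≤ (N : ℝ≥0∞) then (η 0 : ℝ≥0∞) else 0) ∂ν := by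
    refine lintegral_congr_ae (haeW.mono fun η hη => ?_)
    obtain ⟨n, hn⟩ := ENNReal.exists_nat_gt (hη 0)
    refine le_antisymm (le_iSup_of_le n (le_of_eq (if_pos hn.le).symm)) ?_
    exact iSup_le fun N => by split_ifs <;> simp
  have monoind : Monotone fun (N : ℕ) (η : (Fin d → ℤ) → ℕ) =>
      (if SandAux.Mfun d η 0 ≤ (N : ℝ≥0∞) then (η 0 : ℝ≥0∞) else 0) := by
    intro N N' hNN' η
    dsimp only
    split_ifs with h1' h2'
    · exact le_rfl
    · exact absurd (h1'.trans (Nat.cast_le.mpr hNN')) h2'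
    · exact zero_le
    · exact le_rfl
  rw [congrae, lintegral_iSup measind monoind] at hdens
  exact lt_irrefl _ (lt_of_lt_of_le hdens (iSup_le key))
end

section
/- Let d ≥ 1 and let η be the configuration on ℤ^d with η(x) = 2d for all x ≠ 0 and η(0) = 2d + 1 (the maximal stable configuration with one extra grain at the origin). Then η is not stabilizable: sup over finite V of m_V^η(0) = ∞. Consequently the Dirac measure δ_{2d} on the constant configuration 2d is metastable. -/
open MeasureTheory
open scoped ENNReal

section Aux

/-- The unstable configuration: `2d` everywhere, `2d+1` at the origin. -/
def etaM (d : ℕ) : (Fin d → ℤ) → ℕ := fun x => if x = 0 then 2 * d + 1 else 2 * d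

/-- The box `[-n, n]^d` as a finset. -/
noncomputable def boxF (d n : ℕ) : Finset (Fin d → ℤ) :=
  Finset.Icc (fun _ => -(n : ℤ)) (fun _ => (n : ℤ))

lemma mem_boxF {d n : ℕ} {x : Fin d → ℤ} :
    x ∈ boxF d n ↔ ∀ i, -(n : ℤ) ≤ x i ∧ x i ≤ n := by
  simp [boxF, Finset.mem_Icc, Pi.le_def, forall_and]

lemma zero_mem_boxF (d n : ℕ) : (0 : Fin d → ℤ) ∈ boxF d n := by
  rw [mem_boxF]; intro i; simp

lemma boxF_mono {d n : ℕ} : boxF d n ⊆ boxF d (n + 1) := by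
  intro x hx
  rw [mem_boxF] at hx ⊢
  intro i
  have := hx i
  push_cast
  omega

/-- The `p`-th lattice neighbour of `x`, `p : Fin d × Bool`. -/
def nbrF (d : ℕ) (x : Fin d → ℤ) (p : Fin d × Bool) : Fin d → ℤ :=
  fun j => if j = p.1 then x j + (if p.2 then 1 else -1) else x j

lemma adj_nbrF (d : ℕ) (x : Fin d → ℤ) (p : Fin d × Bool) : adj d x (nbrF d x p) := by
  unfold adj nbrF
  rw [Finset.sum_eq_single p.1]
  · rcases p with ⟨i, _ | _⟩ <;> simp
  · intro j _ hj; simp [hj]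
  · intro h; exact absurd (Finset.mem_univ _) h

lemma nbrF_inj (d : ℕ) (x : Fin d → ℤ) : Function.Injective (nbrF d x) := by
  rintro ⟨i, s⟩ ⟨j, t⟩ h
  have hi := congrFun h i
  have hj := congrFun h j
  simp only [nbrF, if_pos rfl] at hi hj
  by_cases hij : i = j
  · subst hij
    simp only [if_pos rfl] at hi
    cases s <;> cases t <;> simp_all <;> omega
  · rw [if_neg hij] at hi
    cases s <;> simp at hi <;> omega

lemma adj_mem_nbrF {d : ℕ} {x y : Fin d → ℤ} (h : adj d x y) :
    ∃ p, y = nbrF d x p := by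
  unfold adj at h
  have hne : (∑ i, (x i - y i).natAbs) ≠ 0 := by omega
  obtain ⟨i, -, hi⟩ := Finset.exists_ne_zero_of_sum_ne_zero hne
  have hsum : (∑ j ∈ Finset.univ.erase i, (x j - y j).natAbs) + (x i - y i).natAbs
      = ∑ j, (x j - y j).natAbs := Finset.sum_erase_add _ _ (Finset.mem_univ i)
  have hrest : ∀ j ∈ Finset.univ.erase i, (x j - y j).natAbs = 0 := by
    intro j hjmem
    have hle : (∑ j ∈ Finset.univ.erase i, (x j - y j).natAbs) = 0 := by omega
    exact (Finset.sum_eq_zero_iff).mp hle j hjmem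
  have hother : ∀ j, j ≠ i → y j = x j := by
    intro j hj
    have := hrest j (Finset.mem_erase.mpr ⟨hj, Finset.mem_univ j⟩)
    omega
  have hi1 : (x i - y i).natAbs = 1 := by omega
  have : y i = x i + 1 ∨ y i = x i - 1 := by omega
  rcases this with hcase | hcase
  · refine ⟨(i, true), funext fun j => ?_⟩
    by_cases hj : j = i
    · subst hj; simp [nbrF, hcase]
    · simp [nbrF, hj, hother j hj]
  · refine ⟨(i, false), funext fun j => ?_⟩
    by_cases hj : j = i
    · subst hj; simp [nbrF, hcase]; omega
    · simp [nbrF, hj, hother j hj]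

lemma nbrF_mem_boxF {d n : ℕ} {x : Fin d → ℤ} (hx : x ∈ boxF d n) (p : Fin d × Bool) :
    nbrF d x p ∈ boxF d (n + 1) := by
  rw [mem_boxF] at hx ⊢
  intro i
  have := hx i
  unfold nbrF
  push_cast
  split
  · split <;> omega
  · omega

/-- Every point of the inner box has at least `2d` neighbours in the outer box. -/
lemma card_nbrs {d n : ℕ} {x : Fin d → ℤ} (hx : x ∈ boxF d n) :
    2 * d ≤ ((boxF d (n + 1)).filter (fun y => adj d x y)).card := by
  have hsub : Finset.univ.image (nbrF d x) ⊆
      (boxF d (n + 1)).filter (fun y => adj d x y) := by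
    intro y hy
    obtain ⟨p, -, rfl⟩ := Finset.mem_image.mp hy
    exact Finset.mem_filter.mpr ⟨nbrF_mem_boxF hx p, adj_nbrF d x p⟩
  have hcard : (Finset.univ.image (nbrF d x)).card = 2 * d := by
    rw [Finset.card_image_of_injective _ (nbrF_inj d x)]
    simp [Fintype.card_prod]
    ring
  rw [← hcard]
  exact Finset.card_le_card hsub

/-- Any stabilizer of `etaM` on a box is everywhere at least 1 on the box. -/
lemma stab_pos {d n : ℕ} {m : (Fin d → ℤ) → ℕ}
    (hm : Stabilizes d (boxF d n) (etaM d) m) :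
    ∀ x ∈ boxF d n, 1 ≤ m x := by
  suffices H : ∀ k : ℕ, ∀ x ∈ boxF d n, (∑ i, (x i).natAbs) = k → 1 ≤ m x by
    intro x hx; exact H _ x hx rfl
  intro k
  induction k using Nat.strong_induction_on with
  | _ k IH =>
    intro x hx hk
    by_contra hm0
    have hmx : m x = 0 := by omega
    have hst := hm x hx
    unfold lapV at hst
    rw [hmx] at hst
    have hSnn : (0 : ℤ) ≤ ∑ y ∈ (boxF d n).filter (fun y => adj d x y), (m y : ℤ) :=
      Finset.sum_nonneg fun y _ => Int.natCast_nonneg _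
    by_cases hx0 : x = 0
    · subst hx0
      simp only [etaM, if_pos rfl] at hst
      push_cast at hst
      omega
    · -- find a closer neighbour
      have hxne : ∃ i, x i ≠ 0 := by
        by_contra hall
        push_neg at hall
        exact hx0 (funext fun i => hall i)
      obtain ⟨i, hi⟩ := hxne
      set p : Fin d × Bool := (i, decide (x i < 0)) with hp
      set x' := nbrF d x p with hx'
      have hxi' : x' i = x i + 1 ∨ x' i = x i - 1 := by
        unfold x' p
        unfold nbrF
        simp only [if_pos rfl]
        by_cases hlt : x i < 0 <;> simp [hlt] <;> omega
      have hxiabs : (x' i).natAbs + 1 = (x i).natAbs := by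
        unfold x' p
        unfold nbrF
        simp only [if_pos rfl]
        by_cases hlt : x i < 0
        · simp [hlt]; omega
        · simp [hlt]; omega
      have hxeq : ∀ j, j ≠ i → x' j = x j := by
        intro j hj
        unfold x' p
        unfold nbrF
        simp [hj]
      have hx'box : x' ∈ boxF d n := by
        rw [mem_boxF] at hx ⊢
        intro j
        by_cases hj : j = i
        · subst hj
          have := hx j
          rcases hxi' with h | h <;> omega
        · rw [hxeq j hj]; exact hx j
      have hl1 : (∑ j, (x' j).natAbs) + 1 = k := by
        rw [← hk]
        rw [← Finset.sum_erase_add _ _ (Finset.mem_univ i),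
            ← Finset.sum_erase_add _ (fun j => (x j).natAbs) (Finset.mem_univ i)]
        have : ∑ j ∈ Finset.univ.erase i, (x' j).natAbs
            = ∑ j ∈ Finset.univ.erase i, (x j).natAbs :=
          Finset.sum_congr rfl fun j hj => by
            rw [hxeq j (Finset.mem_erase.mp hj).1]
        omega
      have hx'pos : 1 ≤ m x' := IH (k - 1) (by omega) x' hx'box (by omega)
      have hx'mem : x' ∈ (boxF d n).filter (fun y => adj d x y) :=
        Finset.mem_filter.mpr ⟨hx'box, adj_nbrF d x p⟩
      have hS1 : (1 : ℤ) ≤ ∑ y ∈ (boxF d n).filter (fun y => adj d x y), (m y : ℤ) := by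
        calc (1 : ℤ) ≤ (m x' : ℤ) := by exact_mod_cast hx'pos
        _ ≤ _ := Finset.single_le_sum (f := fun y => (m y : ℤ))
            (fun y _ => Int.natCast_nonneg _) hx'mem
      have hetax : (etaM d x : ℤ) = 2 * d := by simp [etaM, hx0]
      omega

/-- Shrinking lemma: subtracting one toppling everywhere stabilizes on the smaller box. -/
lemma stab_shrink {d n : ℕ} {m : (Fin d → ℤ) → ℕ}
    (hm : Stabilizes d (boxF d (n + 1)) (etaM d) m) :
    Stabilizes d (boxF d n) (etaM d) (fun y => m y - 1) := by
  have hpos := stab_pos hm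
  intro x hx
  have hx' : x ∈ boxF d (n + 1) := boxF_mono hx
  have h0 := hm x hx'
  unfold lapV at h0 ⊢
  set A := (boxF d n).filter (fun y => adj d x y) with hA
  set B := (boxF d (n + 1)).filter (fun y => adj d x y) with hB
  have hAB : A ⊆ B := Finset.filter_subset_filter _ boxF_mono
  have hposB : ∀ y ∈ B, 1 ≤ m y := fun y hy =>
    hpos y (Finset.mem_filter.mp hy).1
  have hcast : ∑ y ∈ A, ((m y - 1 : ℕ) : ℤ) = ∑ y ∈ A, ((m y : ℤ) - 1) :=
    Finset.sum_congr rfl fun y hy => by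
      have := hposB y (hAB hy); push_cast [Nat.cast_sub this]; ring
  have hcard : 2 * d ≤ B.card := card_nbrs hx
  have hsplit : ∑ y ∈ B, (m y : ℤ) = ∑ y ∈ B \ A, (m y : ℤ) + ∑ y ∈ A, (m y : ℤ) :=
    (Finset.sum_sdiff hAB).symm
  have hBA : ((B \ A).card : ℤ) ≤ ∑ y ∈ B \ A, (m y : ℤ) := by
    have := Finset.card_nsmul_le_sum (B \ A) (fun y => (m y : ℤ)) 1
      (fun y hy => by
        show (1 : ℤ) ≤ (m y : ℤ)
        exact_mod_cast hposB y (Finset.mem_sdiff.mp hy).1)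
    simpa using this
  have hcards : (B \ A).card + A.card = B.card := Finset.card_sdiff_add_card_eq_card hAB
  have hcastmx : ((m x - 1 : ℕ) : ℤ) = (m x : ℤ) - 1 := by
    have := hpos x hx'
    push_cast [Nat.cast_sub this]; ring
  rw [hcast, hcastmx]
  rw [Finset.sum_sub_distrib, Finset.sum_const, nsmul_eq_mul, mul_one]
  have hdd : ((d : ℤ)) = (d : ℤ) := rfl
  -- goal: ↑(etaM d x) - (2*d*(m x - 1) - (∑ A m - #A)) ≤ 2*d
  have hAcard : ((B \ A).card : ℤ) + (A.card : ℤ) = (B.card : ℤ) := by exact_mod_cast hcards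
  have hcardZ : (2 * d : ℤ) ≤ (B.card : ℤ) := by exact_mod_cast hcard
  have h0' : (etaM d x : ℤ) - (2 * d * (m x : ℤ) - (∑ y ∈ B \ A, (m y : ℤ) + ∑ y ∈ A, (m y : ℤ))) ≤ 2 * d := by
    rw [← hsplit]; exact h0
  linarith

/-- The quadratic stabilizer: existence of some stabilizer of `etaM` on each box. -/
lemma exists_stab (d n : ℕ) (hd : 1 ≤ d) :
    Stabilizes d (boxF d n) (etaM d)
      (fun x => ((d : ℤ) * ((n : ℤ) + 1) ^ 2 - ∑ i, (x i) ^ 2).toNat) := by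
  set D : ℤ := (d : ℤ) * ((n : ℤ) + 1) ^ 2 with hD
  have hq : ∀ y : Fin d → ℤ, (∀ i, (y i) ^ 2 ≤ ((n : ℤ) + 1) ^ 2) →
      (∑ i, (y i) ^ 2) ≤ D := by
    intro y hy
    calc (∑ i, (y i) ^ 2) ≤ ∑ _i : Fin d, ((n : ℤ) + 1) ^ 2 :=
          Finset.sum_le_sum fun i _ => hy i
    _ = D := by simp [hD, mul_comm]
  have hbound : ∀ y : Fin d → ℤ, (∀ i, -((n : ℤ) + 1) ≤ y i ∧ y i ≤ (n : ℤ) + 1) →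
      (∑ i, (y i) ^ 2) ≤ D := by
    intro y hy
    exact hq y fun i => by nlinarith [(hy i).1, (hy i).2]
  intro x hx
  rw [mem_boxF] at hx
  have hxb : ∀ i, -((n : ℤ) + 1) ≤ x i ∧ x i ≤ (n : ℤ) + 1 := by
    intro i; have := hx i; omega
  have hxD : (∑ i, (x i) ^ 2) ≤ D := hbound x hxb
  unfold lapV
  have hmx : ((((D - ∑ i, (x i) ^ 2).toNat : ℕ)) : ℤ) = D - ∑ i, (x i) ^ 2 :=
    Int.toNat_of_nonneg (by omega)
  set A := (boxF d n).filter (fun y => adj d x y) with hA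
  set N := Finset.univ.image (nbrF d x) with hN
  have hsubAN : A ⊆ N := by
    intro y hy
    obtain ⟨p, rfl⟩ := adj_mem_nbrF (Finset.mem_filter.mp hy).2
    exact Finset.mem_image.mpr ⟨p, Finset.mem_univ p, rfl⟩
  have hNbox : ∀ y ∈ N, (∀ i, -((n : ℤ) + 1) ≤ y i ∧ y i ≤ (n : ℤ) + 1) := by
    intro y hy
    obtain ⟨p, -, rfl⟩ := Finset.mem_image.mp hy
    intro i
    have := hx i
    unfold nbrF
    split
    · split <;> omega
    · omega
  have hcastN : ∀ y ∈ N, ((((D - ∑ i, (y i) ^ 2).toNat : ℕ)) : ℤ) = D - ∑ i, (y i) ^ 2 := by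
    intro y hy
    exact Int.toNat_of_nonneg (by have := hbound y (hNbox y hy); omega)
  have hsumA : ∑ y ∈ A, ((((D - ∑ i, (y i) ^ 2).toNat : ℕ)) : ℤ)
      ≤ ∑ y ∈ N, (D - ∑ i, (y i) ^ 2) := by
    calc ∑ y ∈ A, ((((D - ∑ i, (y i) ^ 2).toNat : ℕ)) : ℤ)
        = ∑ y ∈ A, (D - ∑ i, (y i) ^ 2) :=
          Finset.sum_congr rfl fun y hy => hcastN y (hsubAN hy)
    _ ≤ ∑ y ∈ N, (D - ∑ i, (y i) ^ 2) := by
          apply Finset.sum_le_sum_of_subset_of_nonneg hsubAN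
          intro y hy _
          have := hbound y (hNbox y hy)
          omega
  have hterm : ∀ p : Fin d × Bool,
      (∑ i, (nbrF d x p i) ^ 2)
        = (∑ i, (x i) ^ 2) + 2 * (if p.2 then 1 else -1) * x p.1 + 1 := by
    intro p
    have hsplit : ∀ j, (nbrF d x p j) ^ 2
        = (x j) ^ 2 + (if j = p.1 then 2 * (if p.2 then 1 else -1) * x j + 1 else 0) := by
      intro j
      unfold nbrF
      split
      · rcases p with ⟨i, _ | _⟩ <;> simp_all <;> ring
      · ring
    simp_rw [hsplit]
    rw [Finset.sum_add_distrib, Finset.sum_ite_eq' Finset.univ p.1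
      (fun j => 2 * (if p.2 then 1 else -1) * x j + 1)]
    rcases p with ⟨i, _ | _⟩ <;> simp <;> ring
  have hzero : (∑ p : Fin d × Bool, 2 * (if p.2 then (1 : ℤ) else -1) * x p.1) = 0 := by
    rw [Fintype.sum_prod_type]
    apply Finset.sum_eq_zero
    intro a _
    rw [Fintype.sum_bool]
    simp
  have hsumN : ∑ y ∈ N, (D - ∑ i, (y i) ^ 2)
      = 2 * d * D - (2 * d * (∑ i, (x i) ^ 2) + 2 * d) := by
    rw [hN, Finset.sum_image (fun p _ q _ h => nbrF_inj d x h)]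
    have h1 : ∀ p : Fin d × Bool, D - (∑ i, (nbrF d x p i) ^ 2)
        = (D - (∑ i, (x i) ^ 2) - 1) - 2 * (if p.2 then 1 else -1) * x p.1 := by
      intro p; rw [hterm p]; ring
    simp_rw [h1]
    rw [Finset.sum_sub_distrib, hzero, Finset.sum_const, Finset.card_univ,
      Fintype.card_prod, Fintype.card_fin, Fintype.card_bool, sub_zero, nsmul_eq_mul]
    push_cast
    ring
  have hS : ∑ y ∈ A, ((((D - ∑ i, (y i) ^ 2).toNat : ℕ)) : ℤ)
      ≤ 2 * d * D - (2 * d * (∑ i, (x i) ^ 2) + 2 * d) := hsumA.trans (le_of_eq hsumN)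
  have heta : (etaM d x : ℤ) ≤ 2 * d + 1 := by
    by_cases h : x = 0 <;> simp [etaM, h]
  have hd' : (1 : ℤ) ≤ (d : ℤ) := by exact_mod_cast hd
  rw [hmx]
  linarith

/-- Lower bound: any stabilizer of `etaM` on `boxF d n` topples the origin at least `n+1` times. -/
lemma stab_lower (d : ℕ) : ∀ n (m : (Fin d → ℤ) → ℕ),
    Stabilizes d (boxF d n) (etaM d) m → n + 1 ≤ m 0 := by
  intro n
  induction n with
  | zero => intro m hm; exact stab_pos hm 0 (zero_mem_boxF d 0)
  | succ n IH =>
    intro m hm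
    have h1 : 1 ≤ m 0 := stab_pos hm 0 (zero_mem_boxF d (n + 1))
    have h2 := IH (fun y => m y - 1) (stab_shrink hm)
    omega

/-- Existence of the minimal stabilizer. -/
lemma exists_minstab (d : ℕ) (V : Finset (Fin d → ℤ)) (η m₀ : (Fin d → ℤ) → ℕ)
    (h₀ : Stabilizes d V η m₀) : ∃ m, IsMinStab d V η m := by
  set S : (Fin d → ℤ) → Set ℕ := fun x => {k | ∃ m', Stabilizes d V η m' ∧ m' x = k} with hS
  have hne : ∀ x, (S x).Nonempty := fun x => ⟨m₀ x, m₀, h₀, rfl⟩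
  refine ⟨fun x => sInf (S x), ?_, ?_⟩
  · intro x hx
    obtain ⟨m', hm', hmx⟩ := Nat.sInf_mem (hne x)
    have h1 := hm' x hx
    have h2 : lapV d V m' x ≤ lapV d V (fun y => sInf (S y)) x := by
      unfold lapV
      have hxx : ((sInf (S x) : ℕ) : ℤ) = (m' x : ℤ) := by exact_mod_cast hmx.symm
      simp only [hxx]
      have hsum : ∑ y ∈ V.filter (fun y => adj d x y), ((sInf (S y) : ℕ) : ℤ)
          ≤ ∑ y ∈ V.filter (fun y => adj d x y), (m' y : ℤ) := by
        apply Finset.sum_le_sum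
        intro y _
        have hy' : m' y ∈ S y := ⟨m', hm', rfl⟩
        exact_mod_cast Nat.sInf_le hy'
      omega
    unfold Stabilizes at h1
    omega
  · intro m' hm' x _
    have hy' : m' x ∈ S x := ⟨m', hm', rfl⟩
    exact Nat.sInf_le hy'

end Aux

/-- the maximal stable configuration with one extra grain at the origin is not
stabilizable — the number of topplings at the origin diverges — and consequently the Dirac
measure on the constant configuration `2d` is metastable. -/
theorem max_config_plus_one_not_stabilizable (d : ℕ) (hd : 1 ≤ d) :
    (¬ ∃ C : ℕ, ∀ (V : Finset (Fin d → ℤ)) (m : (Fin d → ℤ) → ℕ),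
        IsMinStab d V (fun x => if x = 0 then 2 * d + 1 else 2 * d) m →
        (0 : Fin d → ℤ) ∈ V → m 0 ≤ C) ∧
    (Measure.dirac (fun _ : Fin d → ℤ => 2 * d)) (StabSet d) = 1 ∧
    ((Measure.dirac (fun _ : Fin d → ℤ => 2 * d)).map
        (fun η => fun x => if x = 0 then η x + 1 else η x)) (StabSet d) < 1 := by
  have part1 : ¬ ∃ C : ℕ, ∀ (V : Finset (Fin d → ℤ)) (m : (Fin d → ℤ) → ℕ),
      IsMinStab d V (fun x => if x = 0 then 2 * d + 1 else 2 * d) m →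
      (0 : Fin d → ℤ) ∈ V → m 0 ≤ C := by
    rintro ⟨C, hC⟩
    obtain ⟨m, hm⟩ := exists_minstab d (boxF d C) (etaM d) _ (exists_stab d C hd)
    have hle := hC (boxF d C) m hm (zero_mem_boxF d C)
    have hge := stab_lower d C m hm.1
    omega
  refine ⟨part1, ?_, ?_⟩
  · have hmem : (fun _ : Fin d → ℤ => 2 * d) ∈ StabSet d := by
      intro x
      refine ⟨0, fun V m hm hx => ?_⟩
      have hstab0 : Stabilizes d V (fun _ => 2 * d) (fun _ => 0) := by
        intro y hy
        simp [lapV]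
      exact hm.2 _ hstab0 x hx
    exact MeasureTheory.Measure.dirac_apply_of_mem hmem
  · have hfmeas : Measurable
        (fun η : (Fin d → ℤ) → ℕ => fun x => if x = 0 then η x + 1 else η x) := by
      apply measurable_pi_lambda
      intro x
      exact Measurable.comp (measurable_from_top
        (f := fun a : ℕ => if x = 0 then a + 1 else a)) (measurable_pi_apply x)
    have h2 : ((fun η : (Fin d → ℤ) → ℕ => fun x => if x = 0 then η x + 1 else η x)
        (fun _ => 2 * d)) = etaM d := by
      funext x; by_cases h : x = 0 <;> simp [etaM, h]
    rw [MeasureTheory.Measure.map_dirac' hfmeas]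
    show Measure.dirac (etaM d) (StabSet d) < 1
    have hnot : etaM d ∉ StabSet d := by
      intro hstab
      exact part1 (hstab 0)
    have hsing : MeasurableSet ({etaM d} : Set ((Fin d → ℤ) → ℕ)) := by
      have hset : ({etaM d} : Set ((Fin d → ℤ) → ℕ))
          = ⋂ x, (fun η : (Fin d → ℤ) → ℕ => η x) ⁻¹' {etaM d x} := by
        ext η; simp [funext_iff, Set.mem_iInter]
      rw [hset]
      exact MeasurableSet.iInter fun x => (measurable_pi_apply x) (measurableSet_singleton _)
    have hle : Measure.dirac (etaM d) (StabSet d)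
        ≤ Measure.dirac (etaM d) ({etaM d}ᶜ) :=
      measure_mono fun η hη he => hnot (Set.mem_singleton_iff.mp he ▸ hη)
    have h0 : Measure.dirac (etaM d) ({etaM d}ᶜ : Set ((Fin d → ℤ) → ℕ)) = 0 := by
      rw [MeasureTheory.Measure.dirac_apply' _ hsing.compl]
      simp
    have hz : Measure.dirac (etaM d) (StabSet d) = 0 :=
      le_antisymm (h0 ▸ hle) zero_le
    rw [hz]
    exact zero_lt_one
end

section
/- Let V ⊂ ℤ² be a finite rectangle (V = ([a,b] × [c,d]) ∩ ℤ² for integers a ≤ b, c ≤ d) and let η : V → {1,2,3,4} be a recurrent (allowed) configuration in V. Let a_V(x) = 4 − #{y ∈ V : |y − x| = 1} for x ∈ V (so a_V adds 2 grains at each corner site, 1 grain at each other boundary site, and 0 in the interior). Then the stabilization in V of η + a_V topples every site of V exactly once and reproduces η: the minimal stabilizing vector satisfies m_V^{η + a_V}(x) = 1 for all x ∈ V, and (η + a_V) − Δ_V 1 = η. -/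
open MeasureTheory
open scoped ENNReal

/-! Toppling every site of `V` once takes `2d - deg_V x` grains from `x`, which is exactly what
`a_V` adds, so `η + a_V - Δ_V 1 = η` is stable. Conversely, if a stabilizing `m` vanished
somewhere, recurrence would give a site `z` of `W = {m = 0}` with fewer than `η z` neighbours in
`W`; each of its other neighbours in `V` sends it at least one grain, leaving more than `2d`
grains at `z`. -/

def IsRecurrent (d : ℕ) (V : Finset (Fin d → ℤ)) (η : (Fin d → ℤ) → ℕ) : Prop :=
  ∀ W ⊆ V, W.Nonempty → ∃ x ∈ W, (W.filter (fun y => adj d x y)).card < η x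

section
open Finset
variable {d : ℕ}

theorem exists_eq_add_single_of_adj {x y : Fin d → ℤ} (h : adj d x y) :
    ∃ i : Fin d, ∃ s ∈ ({1, -1} : Finset ℤ), y = x + Pi.single i s := by
  unfold adj at h
  obtain ⟨i, -, hi⟩ := exists_ne_zero_of_sum_ne_zero (h ▸ one_ne_zero)
  rw [← add_sum_erase _ _ (mem_univ i)] at h
  have hrest : ∀ j ∈ univ.erase i, x j = y j := by
    intro j hj
    have := sum_eq_zero_iff.mp (by omega : ∑ j ∈ univ.erase i, (x j - y j).natAbs = 0) j hj
    omega
  refine ⟨i, y i - x i, by simp only [mem_insert, mem_singleton]; omega, ?_⟩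
  funext j
  rcases eq_or_ne j i with rfl | hji
  · simp
  · simp [hji, hrest j (mem_erase.mpr ⟨hji, mem_univ j⟩)]

theorem card_filter_adj_le (V : Finset (Fin d → ℤ)) (x : Fin d → ℤ) :
    (V.filter (fun y => adj d x y)).card ≤ 2 * d := by
  have hsub : V.filter (fun y => adj d x y) ⊆
      (univ ×ˢ ({1, -1} : Finset ℤ)).image (fun p => x + Pi.single p.1 p.2) := by
    intro y hy
    obtain ⟨i, s, hs, rfl⟩ := exists_eq_add_single_of_adj (mem_filter.mp hy).2
    exact mem_image.mpr ⟨(i, s), mem_product.mpr ⟨mem_univ i, hs⟩, rfl⟩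
  calc (V.filter (fun y => adj d x y)).card
      ≤ (univ ×ˢ ({1, -1} : Finset ℤ)).card := (card_le_card hsub).trans card_image_le
    _ = 2 * d := by simp [mul_comm]

theorem lapV_one (V : Finset (Fin d → ℤ)) (x : Fin d → ℤ) :
    lapV d V (fun _ => 1) x = 2 * d - (V.filter (fun y => adj d x y)).card := by
  simp [lapV]

theorem add_sub_lapV_one (V : Finset (Fin d → ℤ)) (η : (Fin d → ℤ) → ℕ) (x : Fin d → ℤ) :
    ((η x + (2 * d - (V.filter (fun y => adj d x y)).card) : ℕ) : ℤ) -
      lapV d V (fun _ => 1) x = η x := by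
  have := card_filter_adj_le V x
  rw [lapV_one]
  omega

theorem card_filter_ne_zero_le_sum {ι : Type*} (s : Finset ι) (m : ι → ℕ) :
    (s.filter (fun y => m y ≠ 0)).card ≤ ∑ y ∈ s, m y := by
  rw [card_filter]
  exact sum_le_sum fun y _ => by split_ifs <;> omega

theorem one_le_of_stabilizes_of_isRecurrent {V : Finset (Fin d → ℤ)}
    {η m : (Fin d → ℤ) → ℕ} (hrec : IsRecurrent d V η)
    (hm : Stabilizes d V (fun x => η x + (2 * d - (V.filter (fun y => adj d x y)).card)) m) :
    ∀ x ∈ V, 1 ≤ m x := by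
  by_contra! h
  obtain ⟨x, hxV, hx⟩ := h
  set W := V.filter (fun y => m y = 0)
  obtain ⟨z, hzW, hz⟩ := hrec W (filter_subset _ _) ⟨x, by simp [W, hxV]; omega⟩
  obtain ⟨hzV, hz0⟩ := mem_filter.mp hzW
  have hsplit : (V.filter (fun y => adj d z y)).card = (W.filter (fun y => adj d z y)).card +
      ((V.filter (fun y => adj d z y)).filter (fun y => m y ≠ 0)).card := by
    rw [← card_filter_add_card_filter_not (p := fun y => m y = 0)]
    congr 2
    ext y
    simp only [W, mem_filter]
    tauto
  have hsum : (((V.filter (fun y => adj d z y)).filter (fun y => m y ≠ 0)).card : ℤ) ≤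
      ∑ y ∈ V.filter (fun y => adj d z y), (m y : ℤ) := by
    exact_mod_cast card_filter_ne_zero_le_sum _ m
  have hdeg := card_filter_adj_le V z
  have hstab := hm z hzV
  simp only [lapV, hz0] at hstab
  push_cast [Nat.cast_sub hdeg] at hstab
  omega

theorem isMinStab_one_of_isRecurrent {V : Finset (Fin d → ℤ)} {η : (Fin d → ℤ) → ℕ}
    (hη : ∀ x ∈ V, η x ≤ 2 * d) (hrec : IsRecurrent d V η) :
    IsMinStab d V (fun x => η x + (2 * d - (V.filter (fun y => adj d x y)).card))
      (fun _ => 1) := by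
  refine ⟨fun x hx => ?_, fun m hm => one_le_of_stabilizes_of_isRecurrent hrec hm⟩
  rw [add_sub_lapV_one]
  exact_mod_cast hη x hx

end

theorem rectangle_special_addition_general
    (V : Finset (Fin 2 → ℤ))
    (η : (Fin 2 → ℤ) → ℕ) (hη : ∀ x ∈ V, 1 ≤ η x ∧ η x ≤ 4)
    (hrec : ∀ W ⊆ V, W.Nonempty → ∃ x ∈ W, (W.filter (fun y => adj 2 x y)).card < η x) :
    IsMinStab 2 V (fun x => η x + (4 - (V.filter (fun y => adj 2 x y)).card)) (fun _ => 1) ∧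
    ∀ x ∈ V,
      ((η x + (4 - (V.filter (fun y => adj 2 x y)).card) : ℕ) : ℤ) -
        lapV 2 V (fun _ => 1) x = (η x : ℤ) :=
  ⟨isMinStab_one_of_isRecurrent (fun x hx => (hη x hx).2) hrec,
    fun x _ => add_sub_lapV_one V η x⟩

/-- for a rectangle `V ⊂ ℤ²` and a recurrent configuration `η` on `V`, adding
`a_V(x) = 4 - #{neighbours of x in V}` grains at each `x ∈ V` makes every site topple exactly
once (the minimal stabilizing vector is the all-ones vector) and reproduces `η`. -/
theorem rectangle_special_addition (a b c e : ℤ) (hab : a ≤ b) (hce : c ≤ e)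
    (V : Finset (Fin 2 → ℤ))
    (hV : ∀ x : Fin 2 → ℤ, x ∈ V ↔ (a ≤ x 0 ∧ x 0 ≤ b ∧ c ≤ x 1 ∧ x 1 ≤ e))
    (η : (Fin 2 → ℤ) → ℕ) (hη : ∀ x ∈ V, 1 ≤ η x ∧ η x ≤ 4)
    (hrec : ∀ W ⊆ V, W.Nonempty → ∃ x ∈ W, (W.filter (fun y => adj 2 x y)).card < η x) :
    IsMinStab 2 V (fun x => η x + (4 - (V.filter (fun y => adj 2 x y)).card)) (fun _ => 1) ∧
    ∀ x ∈ V,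
      ((η x + (4 - (V.filter (fun y => adj 2 x y)).card) : ℕ) : ℤ) -
        lapV 2 V (fun _ => 1) x = (η x : ℤ) :=
  rectangle_special_addition_general V η hη hrec
end

section
/- Let d ≥ 1, let V ⊆ W be finite subsets of ℤ^d, and let η, η′ be height configurations on ℤ^d. Then (abelianness): (i) m_V^η(x) ≤ m_W^η(x) for all x ∈ V, i.e. the toppling numbers are nondecreasing in the volume; and (ii) if η(x) ≤ η′(x) for all x, then m_V^η(x) ≤ m_V^{η′}(x) for all x ∈ V, i.e. the toppling numbers are monotone in the configuration. -/
open MeasureTheory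
open scoped ENNReal

/-!
The least stabilizing vector lies below every stabilizing one, so it suffices that a vector
stabilizing `η` in `W` stabilizes it in `V ⊆ W` (dropping the sites of `W \ V` only removes
nonnegative inflow terms, so `Δ_V m ≥ Δ_W m` on `V`), and that one stabilizing `η'` stabilizes
every `η ≤ η'`.
-/

lemma lapV_le_lapV_of_subset {d : ℕ} {V W : Finset (Fin d → ℤ)} (hVW : V ⊆ W)
    (m : (Fin d → ℤ) → ℕ) (x : Fin d → ℤ) : lapV d W m x ≤ lapV d V m x := by
  have hinflow : ∑ y ∈ V.filter (adj d x), (m y : ℤ) ≤ ∑ y ∈ W.filter (adj d x), (m y : ℤ) :=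
    Finset.sum_le_sum_of_subset_of_nonneg (Finset.filter_subset_filter _ hVW)
      fun _ _ _ => Int.natCast_nonneg _
  unfold lapV
  linarith

namespace Stabilizes

variable {d : ℕ} {V W : Finset (Fin d → ℤ)} {η η' m : (Fin d → ℤ) → ℕ}

lemma of_subset (hVW : V ⊆ W) (h : Stabilizes d W η m) : Stabilizes d V η m := fun x hx =>
  calc (η x : ℤ) - lapV d V m x ≤ η x - lapV d W m x := by
        linarith [lapV_le_lapV_of_subset hVW m x]
    _ ≤ 2 * d := h x (hVW hx)

lemma of_le (hle : ∀ x ∈ V, η x ≤ η' x) (h : Stabilizes d V η' m) : Stabilizes d V η m :=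
  fun x hx =>
  calc (η x : ℤ) - lapV d V m x ≤ η' x - lapV d V m x := by
        linarith [(Nat.cast_le (α := ℤ)).2 (hle x hx)]
    _ ≤ 2 * d := h x hx

end Stabilizes

theorem toppling_numbers_monotone_general (d : ℕ) (η η' : (Fin d → ℤ) → ℕ) :
    (∀ (V W : Finset (Fin d → ℤ)), V ⊆ W →
      ∀ mV mW : (Fin d → ℤ) → ℕ, IsMinStab d V η mV → IsMinStab d W η mW →
        ∀ x ∈ V, mV x ≤ mW x) ∧
    ((∀ x, η x ≤ η' x) →
      ∀ (V : Finset (Fin d → ℤ)) (m m' : (Fin d → ℤ) → ℕ),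
        IsMinStab d V η m → IsMinStab d V η' m' →
        ∀ x ∈ V, m x ≤ m' x) := by
  refine ⟨fun V W hVW mV mW hV hW => ?_, fun hle V m m' hm hm' => ?_⟩
  · exact hV.2 mW (hW.1.of_subset hVW)
  · exact hm.2 m' (hm'.1.of_le fun x _ => hle x)

/-- abelianness: the minimal toppling numbers are nondecreasing in the volume
and monotone in the configuration. -/
theorem toppling_numbers_monotone (d : ℕ) (hd : 1 ≤ d)
    (η η' : (Fin d → ℤ) → ℕ) (hη : ∀ x, 1 ≤ η x) (hη' : ∀ x, 1 ≤ η' x) :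
    (∀ (V W : Finset (Fin d → ℤ)), V ⊆ W →
      ∀ mV mW : (Fin d → ℤ) → ℕ, IsMinStab d V η mV → IsMinStab d W η mW →
        ∀ x ∈ V, mV x ≤ mW x) ∧
    ((∀ x, η x ≤ η' x) →
      ∀ (V : Finset (Fin d → ℤ)) (m m' : (Fin d → ℤ) → ℕ),
        IsMinStab d V η m → IsMinStab d V η' m' →
        ∀ x ∈ V, m x ≤ m' x) :=
  toppling_numbers_monotone_general d η η'
end

section
/- Let d ≥ 1, let V ⊂ ℤ^d be finite and let η : V → ℕ be any height configuration on V. Then the set M = {m : V → ℕ : η(x) − (Δ_V m)(x) ≤ 2d for all x ∈ V} of stabilizing toppling vectors is nonempty and has a pointwise least element m_V^η; in particular the finite-volume abelian sandpile stabilization equation η − Δ_V m = ξ with ξ stable always has a minimal solution. -/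
open MeasureTheory
open scoped ENNReal

/-!
A stabilizer is the truncated paraboloid `m y = K * (B - ∑ j, y j ^ 2)⁺` with `K = ∑ x ∈ V, η x`
and `B` so large that no truncation happens at `V` or its neighbours: there its lattice
Laplacian is `2 d K ≥ η`, and dropping the neighbours outside `V` only increases it.
Since `(Δ_V m)(x)` is increasing in `m x` and decreasing in the other values of `m`, the
pointwise infimum of all stabilizers is again a stabilizer, hence the least one.
-/

open Finset

lemma adj.exists_eq_add_single {d : ℕ} {x y : Fin d → ℤ} (h : adj d x y) :
    ∃ i, ∃ s ∈ ({1, -1} : Finset ℤ), y = x + Pi.single i s := by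
  unfold adj at h
  obtain ⟨i, hi⟩ : ∃ i, (x i - y i).natAbs ≠ 0 := by
    by_contra! hc
    simp [hc] at h
  have hsum := add_sum_erase univ (fun j => (x j - y j).natAbs) (mem_univ i)
  have hrest : ∑ j ∈ univ.erase i, (x j - y j).natAbs = 0 := by omega
  refine ⟨i, y i - x i, ?_, ?_⟩
  · simp only [mem_insert, mem_singleton]; omega
  · funext j
    rcases eq_or_ne j i with rfl | hj
    · simp
    · have := sum_eq_zero_iff.mp hrest j (mem_erase.mpr ⟨hj, mem_univ j⟩)
      simp [hj]; omega

def lap (d : ℕ) (f : (Fin d → ℤ) → ℤ) (x : Fin d → ℤ) : ℤ :=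
  ∑ i, ∑ s ∈ ({1, -1} : Finset ℤ), (f x - f (x + Pi.single i s))

lemma sum_filter_adj_le {d : ℕ} (V : Finset (Fin d → ℤ)) (x : Fin d → ℤ)
    (f : (Fin d → ℤ) → ℕ) :
    ∑ y ∈ V.filter (fun y => adj d x y), f y ≤
      ∑ i, ∑ s ∈ ({1, -1} : Finset ℤ), f (x + Pi.single i s) := by
  set P := (univ : Finset (Fin d)) ×ˢ ({1, -1} : Finset ℤ)
  have hsub : V.filter (fun y => adj d x y) ⊆ P.image (fun p => x + Pi.single p.1 p.2) := by
    intro y hy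
    obtain ⟨i, s, hs, rfl⟩ := (mem_filter.mp hy).2.exists_eq_add_single
    exact mem_image.mpr ⟨(i, s), mem_product.mpr ⟨mem_univ i, hs⟩, rfl⟩
  have himage := sum_image_le_of_nonneg (s := P) (g := fun p => x + Pi.single p.1 p.2)
    (f := f) fun _ _ => Nat.zero_le _
  exact ((sum_le_sum_of_subset hsub).trans himage).trans_eq (sum_product _ _ _)

lemma lap_natCast_le_lapV {d : ℕ} (V : Finset (Fin d → ℤ)) (m : (Fin d → ℤ) → ℕ)
    (x : Fin d → ℤ) : lap d (fun y => (m y : ℤ)) x ≤ lapV d V m x := by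
  have h : (∑ y ∈ V.filter (fun y => adj d x y), (m y : ℤ)) ≤
      ∑ i, ∑ s ∈ ({1, -1} : Finset ℤ), (m (x + Pi.single i s) : ℤ) := by
    exact_mod_cast sum_filter_adj_le V x m
  simp only [lap, lapV, sum_sub_distrib, sum_const, card_univ, Fintype.card_fin,
    card_pair (show (1 : ℤ) ≠ -1 by norm_num), nsmul_eq_mul]
  push_cast
  linarith

lemma sum_sq_add_single {d : ℕ} (x : Fin d → ℤ) (i : Fin d) (s : ℤ) :
    ∑ j, (x + Pi.single i s : Fin d → ℤ) j ^ 2 = ∑ j, x j ^ 2 + 2 * s * x i + s ^ 2 := by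
  simp [add_sq, sum_add_distrib, Pi.single_apply]
  ring

lemma sum_sq_add_single_le {d : ℕ} (x : Fin d → ℤ) (i : Fin d) {s : ℤ}
    (hs : s ∈ ({1, -1} : Finset ℤ)) :
    ∑ j, (x + Pi.single i s : Fin d → ℤ) j ^ 2 ≤ 2 * ∑ j, x j ^ 2 + 2 := by
  have hxi : x i ^ 2 ≤ ∑ j, x j ^ 2 := single_le_sum (fun j _ => sq_nonneg (x j)) (mem_univ i)
  have hs2 : s ^ 2 = 1 := by
    rcases mem_insert.mp hs with rfl | hs
    · norm_num
    · rw [mem_singleton.mp hs]; norm_num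
  rw [sum_sq_add_single]
  nlinarith [sq_nonneg (x i - s)]

lemma lap_mul_toNat_sub_sum_sq {d : ℕ} (K : ℕ) {B : ℤ} {x : Fin d → ℤ}
    (hB : 2 * ∑ j, x j ^ 2 + 2 ≤ B) :
    lap d (fun y => ((K * (B - ∑ j, y j ^ 2).toNat : ℕ) : ℤ)) x = 2 * d * K := by
  have hcast : ∀ y : Fin d → ℤ, ∑ j, y j ^ 2 ≤ B →
      ((K * (B - ∑ j, y j ^ 2).toNat : ℕ) : ℤ) = K * (B - ∑ j, y j ^ 2) := by
    intro y hy
    push_cast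
    rw [Int.toNat_of_nonneg (by linarith)]
  have hx : ∑ j, x j ^ 2 ≤ B := by linarith [sum_nonneg fun j (_ : j ∈ univ) => sq_nonneg (x j)]
  have hterm : ∀ i, ∀ s ∈ ({1, -1} : Finset ℤ),
      ((K * (B - ∑ j, x j ^ 2).toNat : ℕ) : ℤ) -
        ((K * (B - ∑ j, (x + Pi.single i s : Fin d → ℤ) j ^ 2).toNat : ℕ) : ℤ) =
        K * (2 * s * x i + s ^ 2) := by
    intro i s hs
    rw [hcast x hx, hcast _ ((sum_sq_add_single_le x i hs).trans hB), sum_sq_add_single]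
    ring
  have hpair : ∀ i, ∑ s ∈ ({1, -1} : Finset ℤ), (K : ℤ) * (2 * s * x i + s ^ 2) = 2 * (K : ℤ) := by
    intro i
    rw [sum_pair (by norm_num)]
    ring
  unfold lap
  rw [sum_congr rfl fun i _ => (sum_congr rfl (hterm i)).trans (hpair i)]
  simp only [sum_const, card_univ, Fintype.card_fin, nsmul_eq_mul]
  ring

lemma exists_stabilizes {d : ℕ} (hd : 1 ≤ d) (V : Finset (Fin d → ℤ)) (η : (Fin d → ℤ) → ℕ) :
    ∃ m, Stabilizes d V η m := by
  set K := ∑ x ∈ V, η x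
  set B := 2 * ∑ x ∈ V, ∑ j, x j ^ 2 + 2
  refine ⟨fun y => K * (B - ∑ j, y j ^ 2).toNat, fun x hx => ?_⟩
  have hqx : ∑ j, x j ^ 2 ≤ ∑ x ∈ V, ∑ j, x j ^ 2 :=
    single_le_sum (f := fun x : Fin d → ℤ => ∑ j, x j ^ 2)
      (fun y _ => sum_nonneg fun j _ => sq_nonneg (y j)) hx
  have hlap := (lap_mul_toNat_sub_sum_sq K (show 2 * ∑ j, x j ^ 2 + 2 ≤ B by omega)).symm.trans_le
    (lap_natCast_le_lapV V _ x)
  have hηx : (η x : ℤ) ≤ K := by exact_mod_cast single_le_sum (fun _ _ => Nat.zero_le _) hx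
  have hd' : (1 : ℤ) ≤ d := by exact_mod_cast hd
  nlinarith

lemma lapV_le_lapV_of_le {d : ℕ} (V : Finset (Fin d → ℤ)) {m m' : (Fin d → ℤ) → ℕ} (h : m ≤ m')
    {x : Fin d → ℤ} (hx : m x = m' x) : lapV d V m' x ≤ lapV d V m x := by
  unfold lapV
  have : ∑ y ∈ V.filter (fun y => adj d x y), (m y : ℤ) ≤
      ∑ y ∈ V.filter (fun y => adj d x y), (m' y : ℤ) :=
    sum_le_sum fun y _ => by exact_mod_cast h y
  rw [hx]
  linarith

lemma exists_isMinStab_of_stabilizes {d : ℕ} {V : Finset (Fin d → ℤ)} {η m₀ : (Fin d → ℤ) → ℕ}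
    (h₀ : Stabilizes d V η m₀) : ∃ m, IsMinStab d V η m := by
  let μ : (Fin d → ℤ) → ℕ := fun x => sInf {n | ∃ m, Stabilizes d V η m ∧ m x = n}
  have hμ_le : ∀ m, Stabilizes d V η m → μ ≤ m := fun m hm x => Nat.sInf_le ⟨m, hm, rfl⟩
  refine ⟨μ, fun x hx => ?_, fun m hm x _ => hμ_le m hm x⟩
  obtain ⟨m, hm, hmx⟩ :=
    Nat.sInf_mem (s := {n | ∃ m, Stabilizes d V η m ∧ m x = n}) ⟨_, m₀, h₀, rfl⟩
  have := lapV_le_lapV_of_le V (hμ_le m hm) hmx.symm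
  linarith [hm x hx]

/-- in any finite volume `V`, the set of stabilizing toppling vectors for any
configuration `η` is nonempty and has a pointwise least element `m_V^η`; in particular the
finite-volume abelian sandpile stabilization equation always has a minimal solution. -/
theorem exists_minimal_stabilizer (d : ℕ) (hd : 1 ≤ d)
    (V : Finset (Fin d → ℤ)) (η : (Fin d → ℤ) → ℕ) :
    ∃ m : (Fin d → ℤ) → ℕ, IsMinStab d V η m := by
  obtain ⟨m₀, h₀⟩ := exists_stabilizes hd V η
  exact exists_isMinStab_of_stabilizes h₀
end
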